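/- arXiv:1902.09616 — 3 statements merged into one kernel-verified Lean document; each statement's English description precedes it below -/
import Mathlib

section
/- Let f be holomorphic on 𝔻, not identically zero, with radial boundary function f* existing almost everywhere on 𝕋 and log⁺|f*| ∈ L^1(𝕋). Define g(z) = exp(−(1/2π) ∫₀^{2π} (e^{it}+z)/(e^{it}−z) · log⁺|f*(e^{it})| dt) for z ∈ 𝔻. Then g is a bounded holomorphic function on 𝔻, and if f belongs to the Smirnov class N⁺, the product fg satisfies |f(z)g(z)| ≤ 1 for every z ∈ 𝔻; in particular fg ∈ H^∞. -/
open MeasureTheory Filter Set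
open scoped ENNReal Topology Real NNReal

noncomputable section

/-- The open unit disk in the complex plane. -/
def unitDisk : Set ℂ := Metric.ball 0 1

/-- The point `r·e^{iθ}`. -/
def circlePt (r θ : ℝ) : ℂ := (r : ℂ) * Complex.exp (θ * Complex.I)

/-- The maximal radial function `Mf(θ) = sup_{0 ≤ r < 1} |f(r e^{iθ})|`, valued in `ℝ≥0∞`. -/
def maxRad (f : ℂ → ℂ) (θ : ℝ) : ℝ≥0∞ :=
  ⨆ r ∈ Set.Ico (0 : ℝ) 1, (‖f (circlePt r θ)‖₊ : ℝ≥0∞)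

/-- `log⁺` on `ℝ≥0∞`. -/
def elogPlus (x : ℝ≥0∞) : ℝ≥0∞ :=
  if x = ∞ then ∞ else ENNReal.ofReal (Real.log x.toReal)

/-- `x ↦ log (1 + x)` on `ℝ≥0∞`. -/
def elog1p (x : ℝ≥0∞) : ℝ≥0∞ :=
  if x = ∞ then ∞ else ENNReal.ofReal (Real.log (1 + x.toReal))

/-- The radial boundary value `f*(e^{iθ}) = lim_{r→1⁻} f(r e^{iθ})`
(a junk value is returned where the limit does not exist). -/
def radialLimit (f : ℂ → ℂ) (θ : ℝ) : ℂ :=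
  limUnder (nhdsWithin (1 : ℝ) (Set.Iio 1)) fun r : ℝ => f (circlePt r θ)

/-- The class `M^p`: holomorphic functions on the unit disk with
`∫₀^{2π} (log⁺ Mf(θ))^p dθ/2π < ∞`. -/
def MpClass (p : ℝ) : Set (ℂ → ℂ) :=
  {f | DifferentiableOn ℂ f unitDisk ∧
    (∫⁻ θ in Set.Ioc 0 (2 * π), elogPlus (maxRad f θ) ^ p) / ENNReal.ofReal (2 * π) < ∞}

/-- The metric `ρ_p` on `M^p`. -/
def rhoMetric (p : ℝ) (f g : ℂ → ℂ) : ℝ≥0∞ :=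
  ((∫⁻ θ in Set.Ioc 0 (2 * π), elog1p (maxRad (f - g) θ) ^ p) /
    ENNReal.ofReal (2 * π)) ^ (1 / p)

/-- The Privalov class `N^p`: holomorphic functions on the unit disk with
`sup_{0≤r<1} ∫₀^{2π} (log⁺|f(re^{iθ})|)^p dθ/2π < ∞`. -/
def NpClass (p : ℝ) : Set (ℂ → ℂ) :=
  {f | DifferentiableOn ℂ f unitDisk ∧
    (⨆ r ∈ Set.Ico (0 : ℝ) 1,
      (∫⁻ θ in Set.Ioc 0 (2 * π),
        ENNReal.ofReal (Real.log ‖f (circlePt r θ)‖) ^ p) / ENNReal.ofReal (2 * π)) < ∞}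

/-- The metric `d_p` on `N^p`, defined via boundary values. -/
def dMetric (p : ℝ) (f g : ℂ → ℂ) : ℝ≥0∞ :=
  ((∫⁻ θ in Set.Ioc 0 (2 * π),
      ENNReal.ofReal (Real.log (1 + ‖radialLimit f θ - radialLimit g θ‖)) ^ p) /
    ENNReal.ofReal (2 * π)) ^ (1 / p)

/-- The Hardy space `H^p`. -/
def HpClass (p : ℝ) : Set (ℂ → ℂ) :=
  {f | DifferentiableOn ℂ f unitDisk ∧
    (⨆ r ∈ Set.Ico (0 : ℝ) 1,
      (∫⁻ θ in Set.Ioc 0 (2 * π), (‖f (circlePt r θ)‖₊ : ℝ≥0∞) ^ p) /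
        ENNReal.ofReal (2 * π)) < ∞}

/-- The Smirnov class `N⁺`. -/
def SmirnovClass : Set (ℂ → ℂ) :=
  {f | DifferentiableOn ℂ f unitDisk ∧
    (∫⁻ θ in Set.Ioc 0 (2 * π), ENNReal.ofReal (Real.log ‖radialLimit f θ‖)) /
      ENNReal.ofReal (2 * π) < ∞ ∧
    Tendsto
      (fun r : ℝ => (∫⁻ θ in Set.Ioc 0 (2 * π),
        ENNReal.ofReal (Real.log ‖f (circlePt r θ)‖)) / ENNReal.ofReal (2 * π))
      (nhdsWithin (1 : ℝ) (Set.Iio 1))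
      (nhds ((∫⁻ θ in Set.Ioc 0 (2 * π),
        ENNReal.ofReal (Real.log ‖radialLimit f θ‖)) / ENNReal.ofReal (2 * π)))}

/-- The normalized Blaschke factor `(|a|/a)·(a − z)/(1 − conj a · z)`. -/
def blaschkeFactor (a z : ℂ) : ℂ :=
  ((‖a‖ : ℂ) / a) * ((a - z) / (1 - (starRingEnd ℂ) a * z))

/-- `B` is a (finite or infinite) Blaschke product on the unit disk. -/
def IsBlaschkeProduct (B : ℂ → ℂ) : Prop :=
  ∃ m : ℕ,
    (∃ n : ℕ, ∃ a : ℕ → ℂ, (∀ k < n, a k ∈ unitDisk ∧ a k ≠ 0) ∧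
      ∀ z ∈ unitDisk, B z = z ^ m * ∏ k ∈ Finset.range n, blaschkeFactor (a k) z) ∨
    (∃ a : ℕ → ℂ, (∀ k, a k ∈ unitDisk ∧ a k ≠ 0) ∧ (Summable fun k => 1 - ‖a k‖) ∧
      ∀ z ∈ unitDisk, B z = z ^ m * ∏' k, blaschkeFactor (a k) z)

/-- `I` is an ideal of the ring `M^p`. -/
structure IsIdealIn (p : ℝ) (I : Set (ℂ → ℂ)) : Prop where
  subset : I ⊆ MpClass p
  zero_mem : (0 : ℂ → ℂ) ∈ I
  add_mem : ∀ f ∈ I, ∀ g ∈ I, f + g ∈ I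
  neg_mem : ∀ f ∈ I, -f ∈ I
  mul_mem : ∀ f ∈ MpClass p, ∀ g ∈ I, f * g ∈ I

/-- `I` is a prime ideal of the ring `M^p`: an ideal such that whenever a product of two
elements of `M^p` lies in `I`, one of the factors lies in `I`. -/
def IsPrimeIdealIn (p : ℝ) (I : Set (ℂ → ℂ)) : Prop :=
  IsIdealIn p I ∧ ∀ f ∈ MpClass p, ∀ g ∈ MpClass p, f * g ∈ I → f ∈ I ∨ g ∈ I

/-- `I` is a dense subset of the metric space `(M^p, ρ_p)`. -/
def IsDenseIn (p : ℝ) (I : Set (ℂ → ℂ)) : Prop :=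
  ∀ f ∈ MpClass p, ∀ ε : ℝ≥0∞, 0 < ε → ∃ g ∈ I, rhoMetric p f g < ε

/-- `I` is an ideal of the ring `N^p`. -/
structure IsIdealInNp (p : ℝ) (I : Set (ℂ → ℂ)) : Prop where
  subset : I ⊆ NpClass p
  zero_mem : (0 : ℂ → ℂ) ∈ I
  add_mem : ∀ f ∈ I, ∀ g ∈ I, f + g ∈ I
  neg_mem : ∀ f ∈ I, -f ∈ I
  mul_mem : ∀ f ∈ NpClass p, ∀ g ∈ I, f * g ∈ I

/-- `I` is a prime ideal of the ring `N^p`. -/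
def IsPrimeIdealInNp (p : ℝ) (I : Set (ℂ → ℂ)) : Prop :=
  IsIdealInNp p I ∧ ∀ f ∈ NpClass p, ∀ g ∈ NpClass p, f * g ∈ I → f ∈ I ∨ g ∈ I

/-- `I` is a dense subset of the metric space `(N^p, d_p)`. -/
def IsDenseInNp (p : ℝ) (I : Set (ℂ → ℂ)) : Prop :=
  ∀ f ∈ NpClass p, ∀ ε : ℝ≥0∞, 0 < ε → ∃ g ∈ I, dMetric p f g < ε



namespace BOM

/-- The Herglotz kernel. -/
def K (z : ℂ) (t : ℝ) : ℂ :=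
  (Complex.exp (t * Complex.I) + z) / (Complex.exp (t * Complex.I) - z)

lemma norm_expI (t : ℝ) : ‖Complex.exp ((t : ℂ) * Complex.I)‖ = 1 := by
  simpa using Complex.abs_exp_ofReal_mul_I t

lemma norm_sub_pos {z : ℂ} (hz : ‖z‖ < 1) (t : ℝ) :
    1 - ‖z‖ ≤ ‖Complex.exp ((t : ℂ) * Complex.I) - z‖ := by
  have := norm_sub_norm_le (Complex.exp ((t : ℂ) * Complex.I)) z
  rw [norm_expI] at this
  linarith

lemma denom_ne_zero {z : ℂ} (hz : ‖z‖ < 1) (t : ℝ) :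
    Complex.exp ((t : ℂ) * Complex.I) - z ≠ 0 := by
  intro h
  have := norm_sub_pos hz t
  rw [h, norm_zero] at this
  linarith

lemma normK_le {z : ℂ} (hz : ‖z‖ < 1) (t : ℝ) :
    ‖K z t‖ ≤ (1 + ‖z‖) / (1 - ‖z‖) := by
  rw [K, norm_div]
  have h1 : ‖Complex.exp ((t : ℂ) * Complex.I) + z‖ ≤ 1 + ‖z‖ := by
    have := norm_add_le (Complex.exp ((t : ℂ) * Complex.I)) z
    rw [norm_expI] at this; linarith
  have h2 := norm_sub_pos hz t
  have h3 : (0:ℝ) < 1 - ‖z‖ := by linarith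
  have h4 : 0 ≤ 1 + ‖z‖ := by positivity
  exact div_le_div₀ h4 h1 h3 h2

lemma reK_eq {z : ℂ} (hz : ‖z‖ < 1) (t : ℝ) :
    (K z t).re = (1 - ‖z‖ ^ 2) / ‖Complex.exp ((t : ℂ) * Complex.I) - z‖ ^ 2 := by
  set w := Complex.exp ((t : ℂ) * Complex.I) with hw
  have hwz : w - z ≠ 0 := denom_ne_zero hz t
  have hns : Complex.normSq (w - z) ≠ 0 := by rwa [ne_eq, Complex.normSq_eq_zero]
  rw [K, Complex.div_re]
  have hnw : Complex.normSq w = 1 := by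
    rw [Complex.normSq_eq_norm_sq, hw, norm_expI]; norm_num
  have hzsq : Complex.normSq z = ‖z‖ ^ 2 := by
    rw [Complex.normSq_eq_norm_sq]
  have key : (w + z).re * (w - z).re + (w + z).im * (w - z).im
      = 1 - ‖z‖ ^ 2 := by
    have := hnw
    have := hzsq
    simp only [Complex.normSq_apply] at hnw hzsq
    simp only [Complex.add_re, Complex.add_im, Complex.sub_re, Complex.sub_im]
    nlinarith [hnw, hzsq]
  rw [← add_div, key, Complex.normSq_eq_norm_sq, ← hw]

lemma reK_nonneg {z : ℂ} (hz : ‖z‖ < 1) (t : ℝ) : 0 ≤ (K z t).re := by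
  rw [reK_eq hz]
  have h1 : ‖z‖ ^ 2 ≤ 1 := by nlinarith [norm_nonneg z]
  exact div_nonneg (by linarith) (by positivity)


lemma continuous_expI : Continuous (fun t : ℝ => Complex.exp ((t : ℂ) * Complex.I)) :=
  Complex.continuous_exp.comp (Complex.continuous_ofReal.mul continuous_const)

lemma continuous_K {z : ℂ} (hz : ‖z‖ < 1) : Continuous (fun t : ℝ => K z t) := by
  apply Continuous.div (by continuity) (by continuity)
  exact fun t => denom_ne_zero hz t

lemma integrableOn_K_mul {M : ℝ → ℝ} (hM : IntegrableOn M (Ioc 0 (2*π)))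
    {z : ℂ} (hz : ‖z‖ < 1) :
    IntegrableOn (fun t => K z t * ((M t : ℝ) : ℂ)) (Ioc 0 (2*π)) := by
  have hmeas : AEStronglyMeasurable (fun t => K z t * ((M t : ℝ) : ℂ))
      (volume.restrict (Ioc 0 (2*π))) :=
    ((continuous_K hz).aestronglyMeasurable).mul
      (Complex.continuous_ofReal.comp_aestronglyMeasurable hM.1)
  apply Integrable.mono' ((hM.norm).const_mul ((1+‖z‖)/(1-‖z‖))) hmeas
  filter_upwards with t
  rw [norm_mul, Complex.norm_real]
  exact mul_le_mul_of_nonneg_right (normK_le hz t) (abs_nonneg _)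

lemma hasDerivAt_K (t : ℝ) {z : ℂ} (hz : ‖z‖ < 1) :
    HasDerivAt (fun z => K z t)
      (2 * Complex.exp ((t:ℂ) * Complex.I) / (Complex.exp ((t:ℂ) * Complex.I) - z)^2) z := by
  set w := Complex.exp ((t:ℂ) * Complex.I)
  have h1 : HasDerivAt (fun z : ℂ => w + z) 1 z := by
    simpa using (hasDerivAt_id z).const_add w
  have h2 : HasDerivAt (fun z : ℂ => w - z) (-1) z := by
    simpa using (hasDerivAt_id z).const_sub w
  have := h1.div h2 (denom_ne_zero hz t)
  convert this using 1
  · rfl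
  · rfl
  · rfl
  ring

lemma normK'_le {z : ℂ} (hz : ‖z‖ < 1) (t : ℝ) :
    ‖2 * Complex.exp ((t:ℂ) * Complex.I) / (Complex.exp ((t:ℂ) * Complex.I) - z)^2‖
      ≤ 2 / (1 - ‖z‖)^2 := by
  rw [norm_div, norm_mul, norm_expI, norm_pow]
  have h2 := norm_sub_pos hz t
  have h3 : (0:ℝ) < 1 - ‖z‖ := by linarith
  have h4 : (0:ℝ) < (1 - ‖z‖)^2 := by positivity
  apply div_le_div₀ (by norm_num) (by norm_num) h4
  gcongr

/-- Differentiability of the parametric Herglotz integral. -/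
lemma hasDerivAt_herglotz {M : ℝ → ℝ} (hM : IntegrableOn M (Ioc 0 (2*π)))
    {z₀ : ℂ} (hz₀ : ‖z₀‖ < 1) :
    HasDerivAt (fun z => ∫ t in Ioc 0 (2*π), K z t * ((M t : ℝ) : ℂ))
      (∫ t in Ioc 0 (2*π),
        2 * Complex.exp ((t:ℂ) * Complex.I) / (Complex.exp ((t:ℂ) * Complex.I) - z₀)^2
          * ((M t : ℝ) : ℂ)) z₀ := by
  set ε := (1 - ‖z₀‖)/2 with hε
  have hε_pos : 0 < ε := by rw [hε]; linarith
  have hball : ∀ z ∈ Metric.ball z₀ ε, ‖z‖ < 1 ∧ 1 - ‖z‖ ≥ ε := by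
    intro z hzb
    rw [Metric.mem_ball, dist_eq_norm] at hzb
    have := norm_sub_norm_le z z₀
    constructor <;> [skip; skip] <;> rw [hε] at * <;> linarith [le_trans this hzb.le]
  have main := hasDerivAt_integral_of_dominated_loc_of_deriv_le (μ := volume.restrict (Ioc 0 (2*π)))
    (F := fun z t => K z t * ((M t : ℝ) : ℂ))
    (F' := fun z t => 2 * Complex.exp ((t:ℂ) * Complex.I) /
        (Complex.exp ((t:ℂ) * Complex.I) - z)^2 * ((M t : ℝ) : ℂ))
    (bound := fun t => 2 / ε^2 * |M t|) (Metric.ball_mem_nhds z₀ hε_pos) ?_ (integrableOn_K_mul hM hz₀) ?_ ?_ ?_ ?_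
  · exact main.2
  · -- measurability of F z for z near z₀
    filter_upwards [Metric.ball_mem_nhds z₀ hε_pos] with z hzb
    exact (integrableOn_K_mul hM (hball z hzb).1).1
  · -- measurability of F' z₀
    have hc : Continuous (fun t : ℝ => 2 * Complex.exp ((t:ℂ) * Complex.I) /
        (Complex.exp ((t:ℂ) * Complex.I) - z₀)^2) := by
      apply Continuous.div (by continuity) (by continuity)
      exact fun t => pow_ne_zero _ (denom_ne_zero hz₀ t)
    exact hc.aestronglyMeasurable.mul
      (Complex.continuous_ofReal.comp_aestronglyMeasurable hM.1)
  · -- bound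
    filter_upwards with t z hzb
    rw [norm_mul, Complex.norm_real]
    apply mul_le_mul_of_nonneg_right _ (abs_nonneg _)
    obtain ⟨h1, h2⟩ := hball z hzb
    calc ‖2 * Complex.exp ((t:ℂ) * Complex.I) / (Complex.exp ((t:ℂ) * Complex.I) - z)^2‖
        ≤ 2 / (1 - ‖z‖)^2 := normK'_le h1 t
      _ ≤ 2 / ε^2 := by
          apply div_le_div₀ (by norm_num) le_rfl (by positivity)
          have : ε ≤ 1 - ‖z‖ := h2
          nlinarith [hε_pos]
  · exact (hM.norm.const_mul _)
  · -- differentiability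
    filter_upwards with t z hzb
    exact ((hasDerivAt_K t (hball z hzb).1).mul_const _)


lemma integral_inner {z : ℂ} (hz : ‖z‖ < 1) :
    ∫ t in Ioc 0 (2*π), Complex.exp ((t:ℂ) * Complex.I) *
      (Complex.exp ((t:ℂ) * Complex.I) - z)⁻¹ = 2 * π := by
  have hzb : z ∈ Metric.ball (0:ℂ) 1 := by simpa [Metric.mem_ball] using hz
  have h := circleIntegral.integral_sub_inv_of_mem_ball hzb
  rw [circleIntegral] at h
  simp only [deriv_circleMap, circleMap_zero, smul_eq_mul] at h
  have h2 : (∫ t in (0:ℝ)..(2*π), (Complex.exp ((t:ℂ) * Complex.I) *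
      (Complex.exp ((t:ℂ) * Complex.I) - z)⁻¹)) * Complex.I = 2 * π * Complex.I := by
    rw [← intervalIntegral.integral_mul_const]
    rw [← h]
    congr 1
    ext t
    push_cast
    ring
  have h3 := mul_right_cancel₀ Complex.I_ne_zero h2
  rw [← h3, intervalIntegral.integral_of_le (by positivity)]

lemma integral_K {z : ℂ} (hz : ‖z‖ < 1) :
    ∫ t in Ioc 0 (2*π), K z t = 2 * π := by
  have hKeq : ∀ t : ℝ, K z t = 2 * (Complex.exp ((t:ℂ) * Complex.I) *
      (Complex.exp ((t:ℂ) * Complex.I) - z)⁻¹) - 1 := by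
    intro t
    have hd := denom_ne_zero hz t
    rw [K]
    field_simp
    ring
  have hint : IntegrableOn (fun t : ℝ => Complex.exp ((t:ℂ) * Complex.I) *
      (Complex.exp ((t:ℂ) * Complex.I) - z)⁻¹) (Ioc 0 (2*π)) := by
    apply Continuous.integrableOn_Ioc
    apply Continuous.mul (by continuity)
    apply Continuous.inv₀ (by continuity)
    exact fun t => denom_ne_zero hz t
  calc ∫ t in Ioc 0 (2*π), K z t
      = ∫ t in Ioc 0 (2*π), (2 * (Complex.exp ((t:ℂ) * Complex.I) *
        (Complex.exp ((t:ℂ) * Complex.I) - z)⁻¹) - 1) := by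
        apply setIntegral_congr_fun measurableSet_Ioc
        intro t _; exact hKeq t
    _ = 2 * (∫ t in Ioc 0 (2*π), Complex.exp ((t:ℂ) * Complex.I) *
        (Complex.exp ((t:ℂ) * Complex.I) - z)⁻¹) - ∫ t in Ioc 0 (2*π), (1:ℂ) := by
        rw [integral_sub (hint.const_mul 2) (integrableOn_const measure_Ioc_lt_top.ne),
          integral_const_mul]
    _ = 2 * (2 * π) - 2 * π := by
        rw [integral_inner hz, setIntegral_const, measureReal_def, Real.volume_Ioc,
          ENNReal.toReal_ofReal (by linarith [Real.pi_pos])]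
        simp [Complex.real_smul]
    _ = 2 * π := by ring

lemma integral_reK {z : ℂ} (hz : ‖z‖ < 1) :
    ∫ t in Ioc 0 (2*π), (K z t).re = 2 * π := by
  have hint : IntegrableOn (fun t : ℝ => K z t) (Ioc 0 (2*π)) :=
    (continuous_K hz).integrableOn_Ioc
  have := integral_re (μ := volume.restrict (Ioc 0 (2*π))) hint
  rw [integral_K hz] at this
  simpa using this


/-- continuity of `log⁺‖·‖`. -/
lemma continuous_logPlus : Continuous (fun x : ℂ => max (Real.log ‖x‖) 0) := by
  rw [continuous_iff_continuousAt]
  intro x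
  by_cases hx : x = 0
  · subst hx
    have hev : (fun y : ℂ => max (Real.log ‖y‖) 0) =ᶠ[𝓝 (0:ℂ)] (fun _ => (0:ℝ)) := by
      filter_upwards [Metric.ball_mem_nhds (0:ℂ) one_pos] with y hy
      rw [Metric.mem_ball, dist_zero_right] at hy
      rcases eq_or_ne y 0 with rfl | hy0
      · simp [Real.log_zero]
      · have : Real.log ‖y‖ ≤ 0 := Real.log_nonpos (norm_nonneg _) hy.le
        rw [max_eq_right this]
    exact ContinuousAt.congr continuousAt_const hev.symm
  · have h1 : ContinuousAt (fun x : ℂ => Real.log ‖x‖) x :=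
      (Real.continuousAt_log (by simpa using hx)).comp continuous_norm.continuousAt
    exact h1.max continuousAt_const

/-- The boundary estimate via the Poisson approximate identity. -/
lemma boundary_est {F : ℂ → ℂ} (hF : ContinuousOn F (Metric.closedBall 0 1))
    {ε : ℝ} (hε : 0 < ε) :
    ∃ ρ₀ : ℝ, 0 ≤ ρ₀ ∧ ρ₀ < 1 ∧ ∀ ρ : ℝ, ρ₀ < ρ → ρ < 1 → ∀ θ : ℝ,
      Real.log ‖F ((ρ:ℂ) * Complex.exp ((θ:ℂ) * Complex.I))‖ ≤
        (1/(2*π)) * (∫ t in Ioc 0 (2*π),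
          (K ((ρ:ℂ) * Complex.exp ((θ:ℂ) * Complex.I)) t).re *
            max (Real.log ‖F (Complex.exp ((t:ℂ) * Complex.I))‖) 0) + ε := by
  set D : ℂ → ℝ := fun x => max (Real.log ‖F x‖) 0 with hDdef
  have hD : ContinuousOn D (Metric.closedBall 0 1) :=
    continuous_logPlus.comp_continuousOn hF
  -- uniform continuity
  have hUC := (isCompact_closedBall (0:ℂ) 1).uniformContinuousOn_of_continuous hD
  rw [Metric.uniformContinuousOn_iff] at hUC
  obtain ⟨δ, hδpos, hδ⟩ := hUC (ε/4) (by linarith)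
  -- bound
  obtain ⟨MB', hMB'⟩ := (isCompact_closedBall (0:ℂ) 1).exists_bound_of_continuousOn hD
  set MB : ℝ := max MB' 0 with hMBdef
  have hMB0 : 0 ≤ MB := le_max_right _ _
  have hMB : ∀ x ∈ Metric.closedBall (0:ℂ) 1, |D x| ≤ MB :=
    fun x hx => le_trans (by simpa using hMB' x hx) (le_max_left _ _)
  set m : ℝ := min (δ/2) (ε*δ^2/(64*(MB+1))) with hmdef
  have hm : 0 < m := by
    apply lt_min (by linarith)
    have : 0 < 64*(MB+1) := by linarith
    positivity
  refine ⟨max (1 - m) 0, le_max_right _ _, ?_, ?_⟩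
  · apply max_lt (by linarith) one_pos
  intro ρ hρ₀ hρ1 θ
  have hρ0 : 0 ≤ ρ := le_trans (le_max_right _ _) hρ₀.le
  have h1ρm : 1 - ρ ≤ m := by
    have := le_trans (le_max_left (1-m) 0) hρ₀.le
    linarith
  have h1ρδ : 1 - ρ ≤ δ/2 := le_trans h1ρm (min_le_left _ _)
  set z : ℂ := (ρ:ℂ) * Complex.exp ((θ:ℂ) * Complex.I) with hzdef
  have hznorm : ‖z‖ = ρ := by
    rw [hzdef, norm_mul, norm_expI, Complex.norm_real, Real.norm_eq_abs, mul_one, abs_of_nonneg hρ0]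
  have hz1 : ‖z‖ < 1 := by rw [hznorm]; exact hρ1
  have hzcb : z ∈ Metric.closedBall (0:ℂ) 1 := by
    rw [Metric.mem_closedBall, dist_zero_right, hznorm]; exact hρ1.le
  have hecb : ∀ t : ℝ, Complex.exp ((t:ℂ) * Complex.I) ∈ Metric.closedBall (0:ℂ) 1 := by
    intro t; rw [Metric.mem_closedBall, dist_zero_right, norm_expI]
  have hdistz : dist z (Complex.exp ((θ:ℂ) * Complex.I)) = 1 - ρ := by
    rw [hzdef, dist_eq_norm]
    have : (ρ:ℂ) * Complex.exp ((θ:ℂ) * Complex.I) - Complex.exp ((θ:ℂ) * Complex.I)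
        = ((ρ - 1 : ℝ):ℂ) * Complex.exp ((θ:ℂ) * Complex.I) := by push_cast; ring
    rw [this, norm_mul, norm_expI, Complex.norm_real, Real.norm_eq_abs, mul_one, abs_of_nonpos (by linarith)]
    ring
  -- continuity of the integrand pieces
  have hBcont : Continuous (fun t : ℝ => D (Complex.exp ((t:ℂ) * Complex.I))) := by
    apply continuous_logPlus.comp
    apply hF.comp_continuous continuous_expI
    exact fun t => hecb t
  have hPcont : Continuous (fun t : ℝ => (K z t).re) :=
    Complex.continuous_re.comp (continuous_K hz1)
  set Bθ : ℝ := D (Complex.exp ((θ:ℂ) * Complex.I)) with hBθdef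
  set A : Set ℝ := {t : ℝ | dist (Complex.exp ((t:ℂ) * Complex.I))
      (Complex.exp ((θ:ℂ) * Complex.I)) < δ} with hAdef
  have hAmeas : MeasurableSet A := by
    apply measurableSet_lt
    · exact (continuous_expI.dist continuous_const).measurable
    · exact measurable_const
  set h : ℝ → ℝ := fun t => (K z t).re *
      (D (Complex.exp ((t:ℂ) * Complex.I)) - Bθ) with hhdef
  have hhcont : Continuous h := hPcont.mul (hBcont.sub continuous_const)
  have hhint : IntegrableOn h (Ioc 0 (2*π)) := hhcont.integrableOn_Ioc
  -- the two piece bounds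
  have hvol : ∀ S : Set ℝ, S ⊆ Ioc 0 (2*π) → (volume S).toReal ≤ 2*π := by
    intro S hS
    have h1 : volume S ≤ volume (Ioc 0 (2*π)) := measure_mono hS
    rw [Real.volume_Ioc] at h1
    calc (volume S).toReal ≤ (ENNReal.ofReal (2*π - 0)).toReal := by
          apply ENNReal.toReal_mono _ h1
          exact ENNReal.ofReal_ne_top
      _ = 2*π := by rw [ENNReal.toReal_ofReal (by linarith [Real.pi_pos])]; ring
  have hbound1 : -(ε/4) * (2*π) ≤ ∫ t in Ioc 0 (2*π) ∩ A, h t := by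
    have step : ∀ t ∈ Ioc 0 (2*π) ∩ A, -(ε/4) * (K z t).re ≤ h t := by
      intro t ht
      have htA : t ∈ A := ht.2
      rw [hAdef, mem_setOf_eq] at htA
      have hd := hδ _ (hecb t) _ (hecb θ) htA
      rw [Real.dist_eq] at hd
      have h1 : -(ε/4) ≤ D (Complex.exp ((t:ℂ) * Complex.I)) - Bθ := by
        have := abs_lt.mp hd
        rw [hBθdef]; linarith [this.1]
      rw [hhdef]
      calc -(ε/4) * (K z t).re = (K z t).re * (-(ε/4)) := by ring
        _ ≤ (K z t).re * (D (Complex.exp ((t:ℂ) * Complex.I)) - Bθ) :=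
            mul_le_mul_of_nonneg_left h1 (reK_nonneg hz1 t)
    calc -(ε/4) * (2*π) ≤ -(ε/4) * ∫ t in Ioc 0 (2*π) ∩ A, (K z t).re := by
          apply mul_le_mul_of_nonpos_left _ (by linarith)
          calc ∫ t in Ioc 0 (2*π) ∩ A, (K z t).re
              ≤ ∫ t in Ioc 0 (2*π), (K z t).re := by
                apply setIntegral_mono_set hPcont.integrableOn_Ioc
                · filter_upwards with t using reK_nonneg hz1 t
                · exact HasSubset.Subset.eventuallyLE inter_subset_left
            _ = 2*π := integral_reK hz1
      _ = ∫ t in Ioc 0 (2*π) ∩ A, -(ε/4) * (K z t).re := by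
          rw [integral_const_mul]
      _ ≤ ∫ t in Ioc 0 (2*π) ∩ A, h t := by
          apply setIntegral_mono_on
          · exact ((hPcont.integrableOn_Ioc).mono_set inter_subset_left).const_mul _
          · exact hhint.mono_set inter_subset_left
          · exact measurableSet_Ioc.inter hAmeas
          · exact step
  have hbound2 : -(ε/4) * (2*π) ≤ ∫ t in Ioc 0 (2*π) \ A, h t := by
    set c : ℝ := 8 * (1 - ρ) / δ^2 * (2 * MB) with hcdef
    have hc0 : 0 ≤ c := by
      rw [hcdef]
      have : 0 ≤ 1 - ρ := by linarith
      positivity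
    have hcε : c ≤ ε/4 := by
      rw [hcdef]
      have h1 : 1 - ρ ≤ ε*δ^2/(64*(MB+1)) := le_trans h1ρm (min_le_right _ _)
      have hδ2 : 0 < δ^2 := by positivity
      have hMB1 : 0 < MB + 1 := by linarith
      rw [div_mul_eq_mul_div, div_le_div_iff₀ (by positivity) (by norm_num)]
      calc 8 * (1-ρ) * (2*MB) * 4 ≤ 8 * (ε*δ^2/(64*(MB+1))) * (2*MB) * 4 := by
            apply mul_le_mul_of_nonneg_right _ (by norm_num)
            apply mul_le_mul_of_nonneg_right _ (by linarith)
            apply mul_le_mul_of_nonneg_left h1 (by norm_num)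
        _ ≤ ε * δ^2 := by
            rw [div_eq_mul_inv]
            have key : 8 * (ε * δ^2 * (64*(MB+1))⁻¹) * (2*MB) * 4
                = ε * δ^2 * (64 * MB * (64*(MB+1))⁻¹) := by ring
            rw [key]
            have h2 : 64 * MB * (64*(MB+1))⁻¹ ≤ 1 := by
              rw [← div_eq_mul_inv, div_le_one (by linarith)]
              linarith
            calc ε * δ^2 * (64 * MB * (64*(MB+1))⁻¹) ≤ ε * δ^2 * 1 :=
                  mul_le_mul_of_nonneg_left h2 (by positivity)
              _ = ε * δ^2 := by ring
    have step : ∀ t ∈ Ioc 0 (2*π) \ A, -c ≤ h t := by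
      intro t ht
      have htA : ¬ (dist (Complex.exp ((t:ℂ) * Complex.I))
          (Complex.exp ((θ:ℂ) * Complex.I)) < δ) := ht.2
      push_neg at htA
      -- denominator lower bound
      have hden : δ/2 ≤ ‖Complex.exp ((t:ℂ) * Complex.I) - z‖ := by
        have htri := dist_triangle (Complex.exp ((t:ℂ) * Complex.I))
          z (Complex.exp ((θ:ℂ) * Complex.I))
        rw [dist_comm z] at htri
        have h2 : dist (Complex.exp ((t:ℂ) * Complex.I)) z ≥ δ - (1 - ρ) := by
          have hd2 : dist (Complex.exp ((θ:ℂ) * Complex.I)) z = 1 - ρ := by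
            rw [dist_comm]; exact hdistz
          linarith [htA, htri, hd2.le, hd2.ge]
        rw [dist_eq_norm] at h2
        linarith
      have hP : (K z t).re ≤ 8 * (1 - ρ) / δ^2 := by
        rw [reK_eq hz1 t, hznorm]
        have hnum : 1 - ρ^2 ≤ 2 * (1 - ρ) := by nlinarith
        have hden2 : (δ/2)^2 ≤ ‖Complex.exp ((t:ℂ) * Complex.I) - z‖^2 := by
          apply sq_le_sq' _ hden; linarith
        calc (1 - ρ^2) / ‖Complex.exp ((t:ℂ) * Complex.I) - z‖^2
            ≤ (2*(1-ρ)) / ((δ/2)^2) := by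
              apply div_le_div₀ (by nlinarith) hnum (by positivity) hden2
          _ = 8 * (1 - ρ) / δ^2 := by field_simp; ring
      have hBd : |D (Complex.exp ((t:ℂ) * Complex.I)) - Bθ| ≤ 2 * MB := by
        rw [hBθdef]
        calc |D (Complex.exp ((t:ℂ) * Complex.I)) - D (Complex.exp ((θ:ℂ) * Complex.I))|
            ≤ |D (Complex.exp ((t:ℂ) * Complex.I))| + |D (Complex.exp ((θ:ℂ) * Complex.I))| :=
              abs_sub _ _
          _ ≤ MB + MB := add_le_add (hMB _ (hecb t)) (hMB _ (hecb θ))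
          _ = 2 * MB := by ring
      rw [hhdef]
      have habs : |h t| ≤ c := by
        rw [hhdef, hcdef, abs_mul]
        apply mul_le_mul _ hBd (abs_nonneg _) _
        · rw [abs_of_nonneg (reK_nonneg hz1 t)]; exact hP
        · have : 0 ≤ 1 - ρ := by linarith
          positivity
      have := abs_le.mp habs
      exact this.1
    calc -(ε/4) * (2*π)
        ≤ -c * (volume (Ioc 0 (2*π) \ A)).toReal := by
          have hv := hvol _ (diff_subset : Ioc 0 (2*π) \ A ⊆ _)
          have hv0 : (0:ℝ) ≤ (volume (Ioc 0 (2*π) \ A)).toReal := ENNReal.toReal_nonneg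
          nlinarith [Real.pi_pos]
      _ = ∫ _ in Ioc 0 (2*π) \ A, -c := by
          rw [setIntegral_const, smul_eq_mul, mul_comm, measureReal_def]
      _ ≤ ∫ t in Ioc 0 (2*π) \ A, h t := by
          apply setIntegral_mono_on
          · exact integrableOn_const (lt_of_le_of_lt (measure_mono diff_subset)
              (by rw [Real.volume_Ioc]; exact ENNReal.ofReal_lt_top)).ne
          · exact hhint.mono_set diff_subset
          · exact measurableSet_Ioc.diff hAmeas
          · exact step
  -- combine
  have hsplit : ∫ t in Ioc 0 (2*π), h t
      = (∫ t in Ioc 0 (2*π) ∩ A, h t) + ∫ t in Ioc 0 (2*π) \ A, h t :=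
    (integral_inter_add_diff hAmeas hhint).symm
  have hmain : -(π * ε) ≤ ∫ t in Ioc 0 (2*π), h t := by
    rw [hsplit]; linarith [hbound1, hbound2]
  -- expand h
  have hexpand : ∫ t in Ioc 0 (2*π), h t
      = (∫ t in Ioc 0 (2*π), (K z t).re * D (Complex.exp ((t:ℂ) * Complex.I)))
        - Bθ * (2*π) := by
    have h1 : ∀ t, h t = (K z t).re * D (Complex.exp ((t:ℂ) * Complex.I))
        - Bθ * (K z t).re := by intro t; rw [hhdef]; ring
    simp_rw [h1]
    rw [integral_sub (show IntegrableOn (fun t => (K z t).re * D (Complex.exp ((t:ℂ) * Complex.I))) (Ioc 0 (2*π)) volume from (hPcont.mul hBcont).integrableOn_Ioc)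
      (show IntegrableOn (fun t => Bθ * (K z t).re) (Ioc 0 (2*π)) volume from (hPcont.integrableOn_Ioc).const_mul Bθ), integral_const_mul, integral_reK hz1]
  -- final chain
  have hπ : 0 < π := Real.pi_pos
  have hkey : Bθ - ε/2 ≤ (1/(2*π)) * ∫ t in Ioc 0 (2*π),
      (K z t).re * D (Complex.exp ((t:ℂ) * Complex.I)) := by
    have h2 : Bθ * (2*π) - π * ε ≤ ∫ t in Ioc 0 (2*π),
        (K z t).re * D (Complex.exp ((t:ℂ) * Complex.I)) := by
      have := hmain
      rw [hexpand] at this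
      linarith
    have h3 := mul_le_mul_of_nonneg_left h2 (le_of_lt (by positivity : (0:ℝ) < 1/(2*π)))
    calc Bθ - ε/2 = (1/(2*π)) * (Bθ * (2*π) - π * ε) := by field_simp
      _ ≤ _ := h3
  have hnear : D z ≤ Bθ + ε/4 := by
    have hδ2' : 1 - ρ < δ := by linarith
    have hd := hδ _ hzcb _ (hecb θ) (by rw [hdistz]; exact hδ2')
    rw [Real.dist_eq] at hd
    have := abs_lt.mp hd
    rw [hBθdef]
    linarith [this.2]
  have hlogD : Real.log ‖F z‖ ≤ D z := by rw [hDdef]; exact le_max_left _ _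
  calc Real.log ‖F z‖ ≤ D z := hlogD
    _ ≤ Bθ + ε/4 := hnear
    _ ≤ (1/(2*π)) * (∫ t in Ioc 0 (2*π),
        (K z t).re * D (Complex.exp ((t:ℂ) * Complex.I))) + ε/2 + ε/4 := by
        linarith [hkey]
    _ ≤ _ := by
        rw [hDdef]
        linarith

/-- real part of the Herglotz integral. -/
lemma reV_eq {M : ℝ → ℝ} (hM : IntegrableOn M (Ioc 0 (2*π))) {w : ℂ} (hw : ‖w‖ < 1) :
    ((1/(2*(π:ℂ))) * ∫ t in Ioc 0 (2*π), K w t * ((M t : ℝ) : ℂ)).re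
      = (1/(2*π)) * ∫ t in Ioc 0 (2*π), (K w t).re * M t := by
  have h1 : (1/(2*(π:ℂ))) = (((1/(2*π) : ℝ)):ℂ) := by push_cast; ring
  rw [h1]
  rw [Complex.re_ofReal_mul]

  congr 1
  have h2 := integral_re (μ := volume.restrict (Ioc 0 (2*π))) (integrableOn_K_mul hM hw)
  simp only [RCLike.re_to_complex] at h2
  rw [← h2]
  apply setIntegral_congr_fun measurableSet_Ioc
  intro t _
  simp [Complex.mul_re]

/-- The key pointwise bound via the maximum principle. -/
lemma bounded_by_poisson {F : ℂ → ℂ} {R : ℝ} (hR : 1 < R)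
    (hF : DifferentiableOn ℂ F (Metric.ball 0 R)) {z : ℂ} (hz : ‖z‖ < 1) :
    ‖F z‖ ≤ Real.exp ((1/(2*π)) * ∫ t in Ioc 0 (2*π),
      (K z t).re * max (Real.log ‖F (Complex.exp ((t:ℂ) * Complex.I))‖) 0) := by
  have hcb : Metric.closedBall (0:ℂ) 1 ⊆ Metric.ball 0 R := by
    apply Metric.closedBall_subset_ball hR
  have hFc : ContinuousOn F (Metric.closedBall 0 1) :=
    (hF.continuousOn).mono hcb
  set B : ℝ → ℝ := fun t => max (Real.log ‖F (Complex.exp ((t:ℂ) * Complex.I))‖) 0 with hBdef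
  have hBcont : Continuous B := by
    apply continuous_logPlus.comp
    apply hFc.comp_continuous continuous_expI
    intro t
    rw [Metric.mem_closedBall, dist_zero_right, norm_expI]
  have hBint : IntegrableOn B (Ioc 0 (2*π)) := hBcont.integrableOn_Ioc
  set V : ℂ → ℂ := fun w => (1/(2*(π:ℂ))) * ∫ t in Ioc 0 (2*π), K w t * ((B t : ℝ) : ℂ)
    with hVdef
  set φ : ℂ → ℂ := fun w => F w * Complex.exp (-V w) with hφdef
  have hφdiff : DifferentiableOn ℂ φ (Metric.ball 0 1) := by
    intro w hw
    rw [Metric.mem_ball, dist_zero_right] at hw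
    apply DifferentiableAt.differentiableWithinAt
    apply DifferentiableAt.mul
    · exact hF.differentiableAt (Metric.isOpen_ball.mem_nhds (by
        rw [Metric.mem_ball, dist_zero_right]; linarith))
    · apply DifferentiableAt.cexp
      apply DifferentiableAt.neg
      exact ((hasDerivAt_herglotz hBint hw).differentiableAt).const_mul _
  have hnormφ : ∀ w, ‖φ w‖ = ‖F w‖ * Real.exp (-(V w).re) := by
    intro w
    rw [hφdef]
    simp [map_mul, Complex.norm_exp]
  -- goal reduction: suffices ‖φ z‖ ≤ 1
  have hVre : ∀ w, ‖w‖ < 1 → (V w).re = (1/(2*π)) * ∫ t in Ioc 0 (2*π), (K w t).re * B t :=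
    fun w hw => reV_eq hBint hw
  suffices hφz : ‖φ z‖ ≤ 1 by
    have h1 := hnormφ z
    have h2 : ‖F z‖ = ‖φ z‖ * Real.exp ((V z).re) := by
      rw [h1, mul_assoc, ← Real.exp_add]
      simp
    rw [h2, ← hVre z hz]
    calc ‖φ z‖ * Real.exp ((V z).re) ≤ 1 * Real.exp ((V z).re) :=
          mul_le_mul_of_nonneg_right hφz (Real.exp_nonneg _)
      _ = Real.exp ((V z).re) := one_mul _
  -- ε-argument
  have hεbound : ∀ ε : ℝ, 0 < ε → ‖φ z‖ ≤ Real.exp ε := by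
    intro ε hε
    obtain ⟨ρ₀, hρ₀0, hρ₀1, hest⟩ := boundary_est hFc hε
    set ρ := (max ρ₀ ‖z‖ + 1)/2 with hρdef
    have hmax1 : max ρ₀ ‖z‖ < 1 := max_lt hρ₀1 hz
    have hρlt1 : ρ < 1 := by rw [hρdef]; linarith
    have hρgt : max ρ₀ ‖z‖ < ρ := by rw [hρdef]; linarith
    have hρpos : 0 < ρ := by
      have := le_max_left ρ₀ ‖z‖
      rw [hρdef]; linarith [hρ₀0]
    -- max modulus on ball 0 ρ
    have hsub : Metric.closedBall (0:ℂ) ρ ⊆ Metric.ball 0 1 :=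
      Metric.closedBall_subset_ball hρlt1
    have hdc : DiffContOnCl ℂ φ (Metric.ball 0 ρ) := by
      constructor
      · exact hφdiff.mono (Metric.ball_subset_ball hρlt1.le)
      · rw [closure_ball (0:ℂ) (ne_of_gt hρpos)]
        exact (hφdiff.continuousOn).mono hsub
    have hfront : ∀ w ∈ frontier (Metric.ball (0:ℂ) ρ), ‖φ w‖ ≤ Real.exp ε := by
      intro w hw
      rw [frontier_ball (0:ℂ) (ne_of_gt hρpos), mem_sphere_zero_iff_norm] at hw
      -- write w in polar form
      set θ := Complex.arg w with hθdef
      have hwpolar : w = (ρ:ℂ) * Complex.exp ((θ:ℂ) * Complex.I) := by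
        rw [hθdef]
        have := Complex.norm_mul_exp_arg_mul_I w
        rw [hw] at this
        exact this.symm
      have hwlt : ‖w‖ < 1 := by rw [hw]; exact hρlt1
      have hle := hest ρ (lt_of_le_of_lt (le_max_left _ _) hρgt) hρlt1 θ
      rw [← hwpolar] at hle
      rw [hnormφ w, hVre w hwlt]
      rcases eq_or_lt_of_le (norm_nonneg (F w)) with h0 | h0
      · rw [← h0, zero_mul]; exact Real.exp_nonneg _
      · have hFw : ‖F w‖ = Real.exp (Real.log ‖F w‖) := (Real.exp_log h0).symm
        rw [hFw, ← Real.exp_add]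
        apply Real.exp_le_exp.mpr
        rw [hBdef] at *
        linarith [hle]
    have := Complex.norm_le_of_forall_mem_frontier_norm_le Metric.isBounded_ball hdc hfront
      (by
        apply subset_closure
        rw [Metric.mem_ball, dist_zero_right]
        exact lt_of_le_of_lt (le_max_right ρ₀ ‖z‖) hρgt)
    exact this
  -- conclude
  have htend : Tendsto (fun ε : ℝ => Real.exp ε) (𝓝[>] 0) (𝓝 1) := by
    have := Real.continuous_exp.tendsto 0
    rw [Real.exp_zero] at this
    exact this.mono_left nhdsWithin_le_nhds
  apply ge_of_tendsto htend
  filter_upwards [self_mem_nhdsWithin] with ε hε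
  exact hεbound ε hε

lemma ofReal_eq_ofReal_max (x : ℝ) : ENNReal.ofReal x = ENNReal.ofReal (max x 0) := by
  rcases le_total x 0 with h | h
  · rw [ENNReal.ofReal_eq_zero.mpr h, max_eq_right h, ENNReal.ofReal_zero]
  · rw [max_eq_left h]

lemma abs_sub_eq_add_sub_two_min (a b : ℝ) : |a - b| = a + b - 2 * min a b := by
  rcases le_total a b with h | h
  · rw [min_eq_left h, abs_of_nonpos (by linarith)]; ring
  · rw [min_eq_right h, abs_of_nonneg (by linarith)]; ring

variable {f : ℂ → ℂ}

/-- a.e. convergence of the truncated log moduli. -/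
lemma ae_tendsto_logPlus
    (hlim : ∀ᵐ θ ∂(volume.restrict (Set.Ioc 0 (2 * π))),
      ∃ l : ℂ, Tendsto (fun r : ℝ => f (circlePt r θ)) (nhdsWithin 1 (Set.Iio 1)) (nhds l)) :
    ∀ᵐ θ ∂(volume.restrict (Set.Ioc 0 (2 * π))),
      Tendsto (fun r : ℝ => max (Real.log ‖f (circlePt r θ)‖) 0)
        (nhdsWithin 1 (Set.Iio 1)) (𝓝 (max (Real.log ‖radialLimit f θ‖) 0)) := by
  filter_upwards [hlim] with θ hθ
  obtain ⟨l, hl⟩ := hθ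
  have hrl : radialLimit f θ = l := hl.limUnder_eq
  rw [hrl]
  exact (continuous_logPlus.continuousAt).tendsto.comp hl

section SM

variable (hf : DifferentiableOn ℂ f (Metric.ball 0 1))
variable (hint : IntegrableOn (fun t => max (Real.log ‖radialLimit f t‖) 0)
      (Set.Ioc 0 (2 * π)) volume)

/-- continuity (hence integrability) of `L_r` for `|r| < 1`. -/
lemma continuous_Lr (hf : DifferentiableOn ℂ f (Metric.ball 0 1)) {r : ℝ} (hr : |r| < 1) :
    Continuous (fun t : ℝ => max (Real.log ‖f (circlePt r t)‖) 0) := by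
  apply continuous_logPlus.comp
  apply (hf.continuousOn).comp_continuous
  · exact (Complex.continuous_ofReal.comp continuous_const).mul continuous_expI
  · intro t
    simp only [circlePt]
    rw [Metric.mem_ball, dist_zero_right, norm_mul]
    have : ‖Complex.exp ((t:ℂ) * Complex.I)‖ = 1 := by
      simpa using Complex.abs_exp_ofReal_mul_I t
    rw [this, mul_one, Complex.norm_real, Real.norm_eq_abs]
    exact hr

/-- convergence of integrals of `L_r` from the Smirnov property. -/
lemma tendsto_integral_Lr
    (hf : DifferentiableOn ℂ f (Metric.ball 0 1))
    (hint : IntegrableOn (fun t => max (Real.log ‖radialLimit f t‖) 0)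
      (Set.Ioc 0 (2 * π)) volume)
    (hfin : (∫⁻ θ in Set.Ioc 0 (2 * π), ENNReal.ofReal (Real.log ‖radialLimit f θ‖)) /
      ENNReal.ofReal (2 * π) < ∞)
    (htd : Tendsto
      (fun r : ℝ => (∫⁻ θ in Set.Ioc 0 (2 * π),
        ENNReal.ofReal (Real.log ‖f (circlePt r θ)‖)) / ENNReal.ofReal (2 * π))
      (nhdsWithin (1 : ℝ) (Set.Iio 1))
      (nhds ((∫⁻ θ in Set.Ioc 0 (2 * π),
        ENNReal.ofReal (Real.log ‖radialLimit f θ‖)) / ENNReal.ofReal (2 * π)))) :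
    Tendsto (fun r : ℝ => ∫ t in Set.Ioc 0 (2*π), max (Real.log ‖f (circlePt r t)‖) 0)
      (nhdsWithin (1 : ℝ) (Set.Iio 1))
      (𝓝 (∫ t in Set.Ioc 0 (2*π), max (Real.log ‖radialLimit f t‖) 0)) := by
  set c : ℝ≥0∞ := ENNReal.ofReal (2 * π) with hcdef
  have hc0 : c ≠ 0 := by
    rw [hcdef]
    simp only [ne_eq, ENNReal.ofReal_eq_zero, not_le]
    positivity
  have hctop : c ≠ ∞ := ENNReal.ofReal_ne_top
  set A : ℝ≥0∞ := ∫⁻ θ in Set.Ioc 0 (2 * π), ENNReal.ofReal (Real.log ‖radialLimit f θ‖)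
    with hAdef
  have hAfin : A ≠ ∞ := by
    intro hA
    rw [hA] at hfin
    rw [ENNReal.top_div_of_ne_top hctop] at hfin
    exact (lt_irrefl _ hfin).elim
  have htd2 : Tendsto (fun r : ℝ => ∫⁻ θ in Set.Ioc 0 (2 * π),
      ENNReal.ofReal (Real.log ‖f (circlePt r θ)‖)) (nhdsWithin 1 (Set.Iio 1)) (𝓝 A) := by
    have h1 := ENNReal.Tendsto.mul_const htd (Or.inr hctop)
    rw [ENNReal.div_mul_cancel hc0 hctop] at h1
    have h2 : (fun r : ℝ => (∫⁻ θ in Set.Ioc 0 (2 * π),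
        ENNReal.ofReal (Real.log ‖f (circlePt r θ)‖)) / c * c)
        = fun r : ℝ => ∫⁻ θ in Set.Ioc 0 (2 * π),
        ENNReal.ofReal (Real.log ‖f (circlePt r θ)‖) := by
      funext r
      rw [ENNReal.div_mul_cancel hc0 hctop]
    rwa [h2] at h1
  have htoReal : Tendsto (fun r : ℝ => (∫⁻ θ in Set.Ioc 0 (2 * π),
      ENNReal.ofReal (Real.log ‖f (circlePt r θ)‖)).toReal)
      (nhdsWithin 1 (Set.Iio 1)) (𝓝 A.toReal) :=
    (ENNReal.tendsto_toReal hAfin).comp htd2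
  -- identify with Bochner integrals
  have hIocmem : Set.Ioo (0:ℝ) 1 ∈ nhdsWithin (1:ℝ) (Set.Iio 1) :=
    Ioo_mem_nhdsLT_of_mem (by constructor <;> norm_num)
  have heq : ∀ r : ℝ, r ∈ Set.Ioo (0:ℝ) 1 →
      (∫⁻ θ in Set.Ioc 0 (2 * π), ENNReal.ofReal (Real.log ‖f (circlePt r θ)‖)).toReal
      = ∫ t in Set.Ioc 0 (2*π), max (Real.log ‖f (circlePt r t)‖) 0 := by
    intro r hr
    have hrabs : |r| < 1 := by rw [abs_of_pos hr.1]; exact hr.2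
    have h1 : 0 ≤ᵐ[volume.restrict (Set.Ioc 0 (2*π))]
        fun t => max (Real.log ‖f (circlePt r t)‖) 0 :=
      Filter.Eventually.of_forall (fun t => le_max_right _ _)
    rw [integral_eq_lintegral_of_nonneg_ae h1
      (continuous_Lr hf hrabs).aestronglyMeasurable]
    congr 1
    apply lintegral_congr
    intro t
    exact ofReal_eq_ofReal_max _
  have heqL : A.toReal = ∫ t in Set.Ioc 0 (2*π), max (Real.log ‖radialLimit f t‖) 0 := by
    rw [hAdef]
    have h1 : 0 ≤ᵐ[volume.restrict (Set.Ioc 0 (2*π))]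
        fun t => max (Real.log ‖radialLimit f t‖) 0 :=
      Filter.Eventually.of_forall (fun t => le_max_right _ _)
    rw [integral_eq_lintegral_of_nonneg_ae h1 hint.aestronglyMeasurable]
    congr 1
    apply lintegral_congr
    intro t
    exact ofReal_eq_ofReal_max _
  rw [← heqL]
  apply htoReal.congr'
  filter_upwards [hIocmem] with r hr
  exact heq r hr

end SM

variable {f : ℂ → ℂ}

lemma tendsto_L1
    (hf : DifferentiableOn ℂ f (Metric.ball 0 1))
    (hint : IntegrableOn (fun t => max (Real.log ‖radialLimit f t‖) 0)
      (Set.Ioc 0 (2 * π)) volume)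
    (hae : ∀ᵐ θ ∂(volume.restrict (Set.Ioc 0 (2 * π))),
      Tendsto (fun r : ℝ => max (Real.log ‖f (circlePt r θ)‖) 0)
        (nhdsWithin 1 (Set.Iio 1)) (𝓝 (max (Real.log ‖radialLimit f θ‖) 0)))
    (hti : Tendsto (fun r : ℝ => ∫ t in Set.Ioc 0 (2*π), max (Real.log ‖f (circlePt r t)‖) 0)
      (nhdsWithin (1:ℝ) (Set.Iio 1))
      (𝓝 (∫ t in Set.Ioc 0 (2*π), max (Real.log ‖radialLimit f t‖) 0))) :
    Tendsto (fun r : ℝ => ∫ t in Set.Ioc 0 (2*π),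
        |max (Real.log ‖f (circlePt r t)‖) 0 - max (Real.log ‖radialLimit f t‖) 0|)
      (nhdsWithin (1:ℝ) (Set.Iio 1)) (𝓝 0) := by
  set L : ℝ → ℝ := fun t => max (Real.log ‖radialLimit f t‖) 0 with hLdef
  have hIocmem : Set.Ioo (0:ℝ) 1 ∈ nhdsWithin (1:ℝ) (Set.Iio 1) :=
    Ioo_mem_nhdsLT_of_mem (by constructor <;> norm_num)
  have habs : ∀ r : ℝ, r ∈ Set.Ioo (0:ℝ) 1 → |r| < 1 := by
    intro r hr; rw [abs_of_pos hr.1]; exact hr.2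
  -- min convergence via dominated convergence
  have hminmeas : ∀ r ∈ Set.Ioo (0:ℝ) 1, AEStronglyMeasurable
      (fun t => min (max (Real.log ‖f (circlePt r t)‖) 0) (L t))
      (volume.restrict (Set.Ioc 0 (2*π))) := by
    intro r hr
    exact ((continuous_Lr hf (habs r hr)).measurable.aemeasurable.min
      hint.aestronglyMeasurable.aemeasurable).aestronglyMeasurable
  have hmin : Tendsto (fun r : ℝ => ∫ t in Set.Ioc 0 (2*π),
      min (max (Real.log ‖f (circlePt r t)‖) 0) (L t))
      (nhdsWithin (1:ℝ) (Set.Iio 1)) (𝓝 (∫ t in Set.Ioc 0 (2*π), L t)) := by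
    apply tendsto_integral_filter_of_dominated_convergence L
    · filter_upwards [hIocmem] with r hr
      exact hminmeas r hr
    · filter_upwards with r
      filter_upwards with t
      have h0 : 0 ≤ min (max (Real.log ‖f (circlePt r t)‖) 0) (L t) :=
        le_min (le_max_right _ _) (le_max_right _ _)
      rw [Real.norm_eq_abs, abs_of_nonneg h0]
      exact min_le_right _ _
    · exact hint
    · filter_upwards [hae] with t ht
      have h2 := ht.min (tendsto_const_nhds (x := L t))
      rw [show min (max (Real.log ‖radialLimit f t‖) 0) (L t) = L t from min_self _] at h2
      exact h2
  -- eventual identity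
  have hev : ∀ᶠ r in nhdsWithin (1:ℝ) (Set.Iio 1),
      (∫ t in Set.Ioc 0 (2*π), max (Real.log ‖f (circlePt r t)‖) 0)
        + (∫ t in Set.Ioc 0 (2*π), L t)
        - 2 * ∫ t in Set.Ioc 0 (2*π), min (max (Real.log ‖f (circlePt r t)‖) 0) (L t)
      = ∫ t in Set.Ioc 0 (2*π),
          |max (Real.log ‖f (circlePt r t)‖) 0 - L t| := by
    filter_upwards [hIocmem] with r hr
    have hLrInt : IntegrableOn (fun t => max (Real.log ‖f (circlePt r t)‖) 0)
        (Set.Ioc 0 (2*π)) := (continuous_Lr hf (habs r hr)).integrableOn_Ioc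
    have hminInt : IntegrableOn
        (fun t => min (max (Real.log ‖f (circlePt r t)‖) 0) (L t)) (Set.Ioc 0 (2*π)) := by
      apply Integrable.mono' hint (hminmeas r hr)
      filter_upwards with t
      have h0 : 0 ≤ min (max (Real.log ‖f (circlePt r t)‖) 0) (L t) :=
        le_min (le_max_right _ _) (le_max_right _ _)
      rw [Real.norm_eq_abs, abs_of_nonneg h0]
      exact min_le_right _ _
    have hpt : (fun t => |max (Real.log ‖f (circlePt r t)‖) 0 - L t|)
        = fun t => (max (Real.log ‖f (circlePt r t)‖) 0 + L t)
          - 2 * min (max (Real.log ‖f (circlePt r t)‖) 0) (L t) :=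
      funext fun t => abs_sub_eq_add_sub_two_min _ _
    have h1 : IntegrableOn (fun t => max (Real.log ‖f (circlePt r t)‖) 0 + L t)
        (Set.Ioc 0 (2*π)) := hLrInt.add hint
    have h2 : IntegrableOn
        (fun t => 2 * min (max (Real.log ‖f (circlePt r t)‖) 0) (L t))
        (Set.Ioc 0 (2*π)) := hminInt.const_mul 2
    rw [hpt, integral_sub h1 h2, integral_add hLrInt hint, integral_const_mul]
  have hfinal := (hti.add (tendsto_const_nhds
      (x := ∫ t in Set.Ioc 0 (2*π), L t))).sub (hmin.const_mul 2)
  rw [show (∫ t in Set.Ioc 0 (2*π), L t) + (∫ t in Set.Ioc 0 (2*π), L t)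
      - 2 * ∫ t in Set.Ioc 0 (2*π), L t = 0 by ring] at hfinal
  exact hfinal.congr' hev

lemma tendsto_weighted {z : ℂ} (hz : ‖z‖ < 1)
    (hf : DifferentiableOn ℂ f (Metric.ball 0 1))
    (hint : IntegrableOn (fun t => max (Real.log ‖radialLimit f t‖) 0)
      (Set.Ioc 0 (2 * π)) volume)
    (hL1 : Tendsto (fun r : ℝ => ∫ t in Set.Ioc 0 (2*π),
        |max (Real.log ‖f (circlePt r t)‖) 0 - max (Real.log ‖radialLimit f t‖) 0|)
      (nhdsWithin (1:ℝ) (Set.Iio 1)) (𝓝 0)) :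
    Tendsto (fun r : ℝ => ∫ t in Set.Ioc 0 (2*π),
        (K z t).re * max (Real.log ‖f (circlePt r t)‖) 0)
      (nhdsWithin (1:ℝ) (Set.Iio 1))
      (𝓝 (∫ t in Set.Ioc 0 (2*π), (K z t).re * max (Real.log ‖radialLimit f t‖) 0)) := by
  set L : ℝ → ℝ := fun t => max (Real.log ‖radialLimit f t‖) 0 with hLdef
  set Cz : ℝ := (1 + ‖z‖) / (1 - ‖z‖) with hCzdef
  have hCz0 : 0 ≤ Cz := by
    rw [hCzdef]
    have h1 : (0:ℝ) < 1 - ‖z‖ := by linarith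
    positivity
  have hPabs : ∀ t : ℝ, |(K z t).re| ≤ Cz := by
    intro t
    exact le_trans (Complex.abs_re_le_norm _) (normK_le hz t)
  have hPcont : Continuous (fun t : ℝ => (K z t).re) :=
    Complex.continuous_re.comp (continuous_K hz)
  have hIocmem : Set.Ioo (0:ℝ) 1 ∈ nhdsWithin (1:ℝ) (Set.Iio 1) :=
    Ioo_mem_nhdsLT_of_mem (by constructor <;> norm_num)
  have habs : ∀ r : ℝ, r ∈ Set.Ioo (0:ℝ) 1 → |r| < 1 := by
    intro r hr; rw [abs_of_pos hr.1]; exact hr.2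
  have hPLint : IntegrableOn (fun t => (K z t).re * L t) (Set.Ioc 0 (2*π)) := by
    apply Integrable.mono' (hint.const_mul Cz)
      (hPcont.aestronglyMeasurable.mul hint.aestronglyMeasurable)
    filter_upwards with t
    simp only [Pi.mul_apply, Real.norm_eq_abs]
    rw [abs_mul]
    have h1 : |L t| = L t := abs_of_nonneg (le_max_right _ _)
    rw [h1]
    exact mul_le_mul_of_nonneg_right (hPabs t) (le_max_right _ _)
  rw [← tendsto_sub_nhds_zero_iff]
  apply squeeze_zero_norm' (a := fun r => Cz * ∫ t in Set.Ioc 0 (2*π),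
    |max (Real.log ‖f (circlePt r t)‖) 0 - L t|)
  · filter_upwards [hIocmem] with r hr
    have hLrInt : IntegrableOn (fun t => max (Real.log ‖f (circlePt r t)‖) 0)
        (Set.Ioc 0 (2*π)) := (continuous_Lr hf (habs r hr)).integrableOn_Ioc
    have hPLrInt : IntegrableOn (fun t => (K z t).re * max (Real.log ‖f (circlePt r t)‖) 0)
        (Set.Ioc 0 (2*π)) := (hPcont.mul (continuous_Lr hf (habs r hr))).integrableOn_Ioc
    rw [← integral_sub hPLrInt hPLint]
    have hsub : ∀ t : ℝ, (K z t).re * max (Real.log ‖f (circlePt r t)‖) 0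
        - (K z t).re * L t = (K z t).re * (max (Real.log ‖f (circlePt r t)‖) 0 - L t) := by
      intro t; ring
    calc ‖∫ t in Set.Ioc 0 (2*π), ((K z t).re * max (Real.log ‖f (circlePt r t)‖) 0
          - (K z t).re * L t)‖
        ≤ ∫ t in Set.Ioc 0 (2*π), ‖(K z t).re * max (Real.log ‖f (circlePt r t)‖) 0
          - (K z t).re * L t‖ := norm_integral_le_integral_norm _
      _ ≤ ∫ t in Set.Ioc 0 (2*π),
          Cz * |max (Real.log ‖f (circlePt r t)‖) 0 - L t| := by
          apply integral_mono (hPLrInt.sub hPLint).norm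
            (((hLrInt.sub hint).abs).const_mul Cz)
          intro t
          simp only [Pi.sub_apply, Real.norm_eq_abs]
          rw [hsub t, abs_mul]
          exact mul_le_mul_of_nonneg_right (hPabs t) (abs_nonneg _)
      _ = Cz * ∫ t in Set.Ioc 0 (2*π),
          |max (Real.log ‖f (circlePt r t)‖) 0 - L t| := by rw [integral_const_mul]
  · have := hL1.const_mul Cz
    simpa using this

/-- The pointwise bound for `f` in the Smirnov class. -/
lemma f_le_exp_poisson {z : ℂ} (hz : ‖z‖ < 1)
    (hf : DifferentiableOn ℂ f (Metric.ball 0 1))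
    (hD : Tendsto (fun r : ℝ => ∫ t in Set.Ioc 0 (2*π),
        (K z t).re * max (Real.log ‖f (circlePt r t)‖) 0)
      (nhdsWithin (1:ℝ) (Set.Iio 1))
      (𝓝 (∫ t in Set.Ioc 0 (2*π), (K z t).re * max (Real.log ‖radialLimit f t‖) 0))) :
    ‖f z‖ ≤ Real.exp ((1/(2*π)) * ∫ t in Set.Ioc 0 (2*π),
      (K z t).re * max (Real.log ‖radialLimit f t‖) 0) := by
  have hIocmem : Set.Ioo (0:ℝ) 1 ∈ nhdsWithin (1:ℝ) (Set.Iio 1) :=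
    Ioo_mem_nhdsLT_of_mem (by constructor <;> norm_num)
  -- eventual inequality
  have hev : ∀ᶠ r : ℝ in nhdsWithin (1:ℝ) (Set.Iio 1),
      ‖f ((r:ℂ) * z)‖ ≤ Real.exp ((1/(2*π)) * ∫ t in Set.Ioc 0 (2*π),
        (K z t).re * max (Real.log ‖f (circlePt r t)‖) 0) := by
    filter_upwards [hIocmem] with r hr
    have hr1 : (1:ℝ) < 1/r := by
      rw [lt_div_iff₀ hr.1]; linarith [hr.2]
    have hFdiff : DifferentiableOn ℂ (fun w => f ((r:ℂ) * w)) (Metric.ball 0 (1/r)) := by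
      apply DifferentiableOn.comp hf ((differentiable_id.const_mul ((r:ℂ))).differentiableOn)
      intro w hw
      rw [Metric.mem_ball, dist_zero_right] at hw ⊢
      rw [norm_mul, Complex.norm_real, Real.norm_eq_abs, abs_of_pos hr.1]
      calc r * ‖w‖ < r * (1/r) := by
            apply mul_lt_mul_of_pos_left hw hr.1
        _ = 1 := by
            rw [mul_one_div]
            exact div_self (ne_of_gt hr.1)
    have := bounded_by_poisson hr1 hFdiff hz
    simpa [circlePt] using this
  have hlhs : Tendsto (fun r : ℝ => ‖f ((r:ℂ) * z)‖) (nhdsWithin (1:ℝ) (Set.Iio 1))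
      (𝓝 ‖f z‖) := by
    have hcont : ContinuousAt f z :=
      (hf.differentiableAt (Metric.isOpen_ball.mem_nhds (by
        rw [Metric.mem_ball, dist_zero_right]; exact hz))).continuousAt
    have htz : Tendsto (fun r : ℝ => (r:ℂ) * z) (nhdsWithin (1:ℝ) (Set.Iio 1)) (𝓝 z) := by
      have h1 : Tendsto (fun r : ℝ => (r:ℂ) * z) (𝓝 1) (𝓝 ((1:ℂ) * z)) :=
        (Complex.continuous_ofReal.tendsto 1).mul_const z
      rw [one_mul] at h1
      exact h1.mono_left nhdsWithin_le_nhds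
    exact (hcont.tendsto.comp htz).norm
  have hrhs : Tendsto (fun r : ℝ => Real.exp ((1/(2*π)) * ∫ t in Set.Ioc 0 (2*π),
      (K z t).re * max (Real.log ‖f (circlePt r t)‖) 0)) (nhdsWithin (1:ℝ) (Set.Iio 1))
      (𝓝 (Real.exp ((1/(2*π)) * ∫ t in Set.Ioc 0 (2*π),
        (K z t).re * max (Real.log ‖radialLimit f t‖) 0))) :=
    (Real.continuous_exp.continuousAt.tendsto).comp (hD.const_mul _)
  exact le_of_tendsto_of_tendsto hlhs hrhs hev

end BOM

/-- For `f` holomorphic on the disk, not identically zero, with radial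
boundary values existing a.e. and `log⁺|f*| ∈ L¹(𝕋)`, the function
`g(z) = exp(−(1/2π) ∫₀^{2π} (e^{it}+z)/(e^{it}−z)·log⁺|f*(e^{it})| dt)` is bounded and
holomorphic on the disk, and if `f` belongs to the Smirnov class `N⁺` then `|f(z)g(z)| ≤ 1`
for all `z` in the disk; in particular `f·g ∈ H^∞`. -/
theorem bounded_outer_multiplier (f : ℂ → ℂ)
    (hf : DifferentiableOn ℂ f unitDisk)
    (hnz : ¬ Set.EqOn f 0 unitDisk)
    (hlim : ∀ᵐ θ ∂(volume.restrict (Set.Ioc 0 (2 * π))),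
      ∃ l : ℂ, Tendsto (fun r : ℝ => f (circlePt r θ)) (nhdsWithin 1 (Set.Iio 1)) (nhds l))
    (hint : IntegrableOn (fun t => max (Real.log ‖radialLimit f t‖) 0)
      (Set.Ioc 0 (2 * π)) volume)
    (g : ℂ → ℂ)
    (hg : ∀ z ∈ unitDisk, g z = Complex.exp (-(1 / (2 * (π : ℂ))) *
      ∫ t in Set.Ioc 0 (2 * π),
        ((Complex.exp (t * Complex.I) + z) / (Complex.exp (t * Complex.I) - z)) *
          ((max (Real.log ‖radialLimit f t‖) 0 : ℝ) : ℂ))) :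
    DifferentiableOn ℂ g unitDisk ∧ (∃ C : ℝ, ∀ z ∈ unitDisk, ‖g z‖ ≤ C) ∧
      (f ∈ SmirnovClass → ∀ z ∈ unitDisk, ‖f z * g z‖ ≤ 1) := by
  have hmem : ∀ w : ℂ, w ∈ unitDisk ↔ ‖w‖ < 1 := by
    intro w; rw [unitDisk, Metric.mem_ball, dist_zero_right]
  have hfball : DifferentiableOn ℂ f (Metric.ball 0 1) := hf
  have hre : ∀ z : ℂ, ‖z‖ < 1 →
      ((-(1/(2*(π:ℂ)))) * ∫ t in Set.Ioc 0 (2*π),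
        BOM.K z t * ((max (Real.log ‖radialLimit f t‖) 0 : ℝ) : ℂ)).re
      = -((1/(2*π)) * ∫ t in Set.Ioc 0 (2*π),
          (BOM.K z t).re * max (Real.log ‖radialLimit f t‖) 0) := by
    intro z hz
    rw [neg_mul, Complex.neg_re, BOM.reV_eq hint hz]
  have hgnorm : ∀ z ∈ unitDisk, ‖g z‖ =
      Real.exp (-((1/(2*π)) * ∫ t in Set.Ioc 0 (2*π),
        (BOM.K z t).re * max (Real.log ‖radialLimit f t‖) 0)) := by
    intro z hz
    have hzn := (hmem z).mp hz
    rw [hg z hz, Complex.norm_exp]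
    congr 1
    exact hre z hzn
  refine ⟨?_, ⟨1, ?_⟩, ?_⟩
  · -- differentiability of g
    intro z₀ hz₀
    have hz₀n : ‖z₀‖ < 1 := (hmem z₀).mp hz₀
    have hE : DifferentiableAt ℂ (fun z => Complex.exp ((-(1/(2*(π:ℂ)))) *
        ∫ t in Set.Ioc 0 (2*π),
          BOM.K z t * ((max (Real.log ‖radialLimit f t‖) 0 : ℝ) : ℂ))) z₀ := by
      apply DifferentiableAt.cexp
      exact ((BOM.hasDerivAt_herglotz hint hz₀n).differentiableAt).const_mul _
    have hopen : IsOpen unitDisk := Metric.isOpen_ball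
    have hEq : g =ᶠ[𝓝 z₀] (fun z => Complex.exp ((-(1/(2*(π:ℂ)))) *
        ∫ t in Set.Ioc 0 (2*π),
          BOM.K z t * ((max (Real.log ‖radialLimit f t‖) 0 : ℝ) : ℂ))) := by
      filter_upwards [hopen.mem_nhds hz₀] with w hw
      exact hg w hw
    exact (hE.congr_of_eventuallyEq hEq).differentiableWithinAt
  · -- bound on g
    intro z hz
    have hzn := (hmem z).mp hz
    rw [hgnorm z hz]
    have hnonneg : 0 ≤ ∫ t in Set.Ioc 0 (2*π),
        (BOM.K z t).re * max (Real.log ‖radialLimit f t‖) 0 :=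
      setIntegral_nonneg measurableSet_Ioc
        (fun t _ => mul_nonneg (BOM.reK_nonneg hzn t) (le_max_right _ _))
    calc Real.exp (-((1/(2*π)) * ∫ t in Set.Ioc 0 (2*π),
          (BOM.K z t).re * max (Real.log ‖radialLimit f t‖) 0))
        ≤ Real.exp 0 := by
          apply Real.exp_le_exp.mpr
          have h1 : 0 ≤ (1/(2*π)) * ∫ t in Set.Ioc 0 (2*π),
              (BOM.K z t).re * max (Real.log ‖radialLimit f t‖) 0 := by
            apply mul_nonneg _ hnonneg
            have := Real.pi_pos
            positivity
          linarith
      _ = 1 := Real.exp_zero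
  · -- the Smirnov bound
    intro hfSm z hz
    have hzn := (hmem z).mp hz
    obtain ⟨hfd, hfin, htd⟩ := hfSm
    have hae := BOM.ae_tendsto_logPlus (f := f) hlim
    have hti := BOM.tendsto_integral_Lr hfball hint hfin htd
    have hL1 := BOM.tendsto_L1 hfball hint hae hti
    have hD := BOM.tendsto_weighted hzn hfball hint hL1
    have hfb := BOM.f_le_exp_poisson hzn hfball hD
    rw [norm_mul, hgnorm z hz]
    calc ‖f z‖ * Real.exp (-((1/(2*π)) * ∫ t in Set.Ioc 0 (2*π),
          (BOM.K z t).re * max (Real.log ‖radialLimit f t‖) 0))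
        ≤ Real.exp ((1/(2*π)) * ∫ t in Set.Ioc 0 (2*π),
            (BOM.K z t).re * max (Real.log ‖radialLimit f t‖) 0)
          * Real.exp (-((1/(2*π)) * ∫ t in Set.Ioc 0 (2*π),
            (BOM.K z t).re * max (Real.log ‖radialLimit f t‖) 0)) :=
          mul_le_mul_of_nonneg_right hfb (Real.exp_nonneg _)
      _ = 1 := by rw [← Real.exp_add]; simp
end
end

section
/- Let p > 1, let F be holomorphic on 𝔻 with MF(θ) its maximal radial function, and suppose F_n is holomorphic on 𝔻 with (F_n)^n = F for a positive integer n. Then for almost every θ, (log(1 + M(F_n − 1)(θ)))^p ≤ 2^{p−1}((2 log 2)^p + (log⁺ MF(θ))^p). Consequently, if F ∈ M^p then F_n ∈ M^p for every positive integer n. -/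
open MeasureTheory Filter Set
open scoped ENNReal Topology Real NNReal

noncomputable section

lemma circlePt_mem (r θ : ℝ) (hr : r ∈ Set.Ico (0:ℝ) 1) : circlePt r θ ∈ unitDisk := by
  simp only [unitDisk, Metric.mem_ball, dist_zero_right, circlePt]
  rw [norm_mul, Complex.norm_real]
  simp [Complex.norm_exp, abs_of_nonneg hr.1]
  exact hr.2

lemma ennreal_two_rpow (a b : ℝ≥0∞) {p : ℝ} (hp : 1 ≤ p) :
    (a + b) ^ p ≤ (2:ℝ≥0∞) ^ (p - 1) * (a ^ p + b ^ p) := by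
  have hp0 : 0 < p := lt_of_lt_of_le one_pos hp
  have h2 : (0:ℝ≥0∞) < (2:ℝ≥0∞) ^ (p - 1) :=
    ENNReal.rpow_pos (by norm_num) (by norm_num)
  rcases eq_or_ne a ∞ with rfl | ha
  · have hr : (2:ℝ≥0∞) ^ (p - 1) * (⊤ ^ p + b ^ p) = ⊤ := by
      rw [ENNReal.top_rpow_of_pos hp0, top_add, ENNReal.mul_top h2.ne']
    rw [hr]; exact le_top
  rcases eq_or_ne b ∞ with rfl | hb
  · have hr : (2:ℝ≥0∞) ^ (p - 1) * (a ^ p + ⊤ ^ p) = ⊤ := by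
      rw [ENNReal.top_rpow_of_pos hp0, add_top, ENNReal.mul_top h2.ne']
    rw [hr]; exact le_top
  lift a to ℝ≥0 using ha
  lift b to ℝ≥0 using hb
  have key := NNReal.rpow_add_le_mul_rpow_add_rpow a b hp
  calc ((a:ℝ≥0∞) + b) ^ p = (((a + b : ℝ≥0) : ℝ≥0∞)) ^ p := by norm_cast
    _ = (((a + b) ^ p : ℝ≥0) : ℝ≥0∞) := by rw [ENNReal.coe_rpow_of_nonneg _ hp0.le]
    _ ≤ (((2:ℝ≥0) ^ (p-1) * (a ^ p + b ^ p) : ℝ≥0) : ℝ≥0∞) := ENNReal.coe_le_coe.mpr key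
    _ = (2:ℝ≥0∞) ^ (p - 1) * ((a:ℝ≥0∞) ^ p + (b:ℝ≥0∞) ^ p) := by
        rw [ENNReal.coe_mul, ENNReal.coe_add,
          ENNReal.coe_rpow_of_ne_zero (two_ne_zero),
          ENNReal.coe_rpow_of_nonneg _ hp0.le, ENNReal.coe_rpow_of_nonneg _ hp0.le]
        norm_cast

lemma elogPlus_top : elogPlus ∞ = ∞ := if_pos rfl
lemma elogPlus_eq (x : ℝ≥0∞) (hx : x ≠ ∞) :
    elogPlus x = ENNReal.ofReal (Real.log x.toReal) := if_neg hx
lemma elog1p_eq (x : ℝ≥0∞) (hx : x ≠ ∞) :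
    elog1p x = ENNReal.ofReal (Real.log (1 + x.toReal)) := if_neg hx

lemma elog1p_le (x y : ℝ≥0∞) (hxy : x ≤ 1 + max 1 y) :
    elog1p x ≤ ENNReal.ofReal (2 * Real.log 2) + elogPlus y := by
  rcases le_total y 1 with hy | hy
  · -- y ≤ 1 : x ≤ 2
    have hx2 : x ≤ 2 := by
      calc x ≤ 1 + max 1 y := hxy
        _ = 1 + 1 := by rw [max_eq_left hy]
        _ = 2 := by norm_num
    have hx : x ≠ ∞ := ne_top_of_le_ne_top (by norm_num) hx2
    have hxr : x.toReal ≤ 2 := by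
      have := ENNReal.toReal_mono (by norm_num) hx2
      simpa using this
    rw [elog1p_eq x hx]
    refine le_trans ?_ le_self_add
    refine ENNReal.ofReal_le_ofReal ?_
    calc Real.log (1 + x.toReal) ≤ Real.log 4 := by
          apply Real.log_le_log (by positivity)
          linarith
      _ = 2 * Real.log 2 := by
          rw [show (4:ℝ) = 2 ^ 2 by norm_num, Real.log_pow]; ring
  · -- 1 ≤ y
    rcases eq_or_ne y ∞ with rfl | hyt
    · rw [elogPlus_top, add_top]; exact le_top
    rw [max_eq_right hy] at hxy
    have hx : x ≠ ∞ := ne_top_of_le_ne_top (by simp [hyt]) hxy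
    have hs1 : (1:ℝ) ≤ y.toReal := by
      have := ENNReal.toReal_mono hyt hy
      simpa using this
    have hxr : x.toReal ≤ 1 + y.toReal := by
      have := ENNReal.toReal_mono (by simp [hyt]) hxy
      rwa [ENNReal.toReal_add (by norm_num) hyt, ENNReal.toReal_one] at this
    rw [elog1p_eq x hx, elogPlus_eq y hyt]
    have hlog : Real.log (1 + x.toReal) ≤ 2 * Real.log 2 + Real.log y.toReal := by
      calc Real.log (1 + x.toReal) ≤ Real.log (4 * y.toReal) := by
            apply Real.log_le_log (by positivity)
            linarith
        _ = Real.log 4 + Real.log y.toReal := by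
            rw [Real.log_mul (by norm_num) (by linarith)]
        _ = 2 * Real.log 2 + Real.log y.toReal := by
            rw [show (4:ℝ) = 2 ^ 2 by norm_num, Real.log_pow]; ring
    calc ENNReal.ofReal (Real.log (1 + x.toReal))
        ≤ ENNReal.ofReal (2 * Real.log 2 + Real.log y.toReal) := ENNReal.ofReal_le_ofReal hlog
      _ ≤ ENNReal.ofReal (2 * Real.log 2) + ENNReal.ofReal (Real.log y.toReal) :=
          ENNReal.ofReal_add_le

lemma elogPlus_le (x y : ℝ≥0∞) (hxy : x ≤ max 1 y) : elogPlus x ≤ elogPlus y := by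
  rcases le_total x 1 with h1 | h1
  · have hx : x ≠ ∞ := ne_top_of_le_ne_top (by norm_num) h1
    have : x.toReal ≤ 1 := by
      have := ENNReal.toReal_mono (by norm_num) h1
      simpa using this
    rw [elogPlus_eq x hx,
      ENNReal.ofReal_eq_zero.mpr (Real.log_nonpos ENNReal.toReal_nonneg this)]
    exact zero_le
  · rcases le_total y 1 with h | h
    · have hx1 : x = 1 := le_antisymm (by rwa [max_eq_left h] at hxy) h1
      rw [hx1, elogPlus_eq 1 (by norm_num)]
      simp
    · have hxy' : x ≤ y := by rwa [max_eq_right h] at hxy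
      rcases eq_or_ne y ∞ with rfl | hyt
      · rw [elogPlus_top]; exact le_top
      have hx : x ≠ ∞ := ne_top_of_le_ne_top hyt hxy'
      rw [elogPlus_eq x hx, elogPlus_eq y hyt]
      apply ENNReal.ofReal_le_ofReal
      have hx1 : (1:ℝ) ≤ x.toReal := by
        have := ENNReal.toReal_mono hx h1
        simpa using this
      exact Real.log_le_log (by linarith) (ENNReal.toReal_mono hyt hxy')

lemma norm_root_le (F Fn : ℂ → ℂ) (n : ℕ) (hn : 1 ≤ n)
    (hpow : ∀ z ∈ unitDisk, Fn z ^ n = F z) (z : ℂ) (hz : z ∈ unitDisk) :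
    ‖Fn z‖ ≤ max 1 ‖F z‖ := by
  have h : ‖Fn z‖ ^ n = ‖F z‖ := by rw [← norm_pow, hpow z hz]
  rcases le_total ‖Fn z‖ 1 with h1 | h1
  · exact le_max_of_le_left h1
  · refine le_max_of_le_right ?_
    rw [← h]
    exact le_self_pow₀ h1 (by omega)


/-- If `F`, `F_n` are holomorphic on the disk with `(F_n)^n = F` for a
positive integer `n`, then a.e.
`(log(1+M(F_n−1)(θ)))^p ≤ 2^{p−1}·((2 log 2)^p + (log⁺ MF(θ))^p)`; consequently `F ∈ M^p`
implies `F_n ∈ M^p`. -/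
theorem root_maximal_estimate (p : ℝ) (hp : 1 < p)
    (F Fn : ℂ → ℂ) (n : ℕ) (hn : 1 ≤ n)
    (hF : DifferentiableOn ℂ F unitDisk) (hFn : DifferentiableOn ℂ Fn unitDisk)
    (hpow : ∀ z ∈ unitDisk, Fn z ^ n = F z) :
    (∀ᵐ θ ∂(volume.restrict (Set.Ioc 0 (2 * π))),
      elog1p (maxRad (Fn - 1) θ) ^ p ≤
        ENNReal.ofReal ((2 : ℝ) ^ (p - 1)) *
          (ENNReal.ofReal ((2 * Real.log 2) ^ p) + elogPlus (maxRad F θ) ^ p)) ∧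
    (F ∈ MpClass p → Fn ∈ MpClass p) := by
  have hp0 : (0:ℝ) ≤ p := by linarith
  -- pointwise bound on maxRad Fn
  have hFnbd : ∀ θ, maxRad Fn θ ≤ max 1 (maxRad F θ) := by
    intro θ
    refine iSup₂_le fun r hr => ?_
    have hz := circlePt_mem r θ hr
    have h1 : ‖Fn (circlePt r θ)‖ ≤ max 1 ‖F (circlePt r θ)‖ :=
      norm_root_le F Fn n hn hpow _ hz
    have h2 : (‖Fn (circlePt r θ)‖₊ : ℝ≥0∞) ≤ max 1 (‖F (circlePt r θ)‖₊ : ℝ≥0∞) := by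
      exact_mod_cast h1
    refine h2.trans (max_le_max le_rfl ?_)
    exact le_iSup₂ (f := fun r (_ : r ∈ Set.Ico (0:ℝ) 1) => (‖F (circlePt r θ)‖₊ : ℝ≥0∞)) r hr
  have hFn1bd : ∀ θ, maxRad (Fn - 1) θ ≤ 1 + max 1 (maxRad F θ) := by
    intro θ
    refine iSup₂_le fun r hr => ?_
    have hnn : ‖Fn (circlePt r θ) - 1‖₊ ≤ ‖Fn (circlePt r θ)‖₊ + 1 := by
      simpa using nnnorm_sub_le (Fn (circlePt r θ)) 1
    have h2 : (‖(Fn - 1) (circlePt r θ)‖₊ : ℝ≥0∞) ≤ (‖Fn (circlePt r θ)‖₊ : ℝ≥0∞) + 1 := by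
      simp only [Pi.sub_apply, Pi.one_apply]
      exact_mod_cast hnn
    refine h2.trans ?_
    have h3 : (‖Fn (circlePt r θ)‖₊ : ℝ≥0∞) ≤ max 1 (maxRad F θ) := by
      have hz := circlePt_mem r θ hr
      have h1 : ‖Fn (circlePt r θ)‖ ≤ max 1 ‖F (circlePt r θ)‖ :=
        norm_root_le F Fn n hn hpow _ hz
      have h2' : (‖Fn (circlePt r θ)‖₊ : ℝ≥0∞) ≤ max 1 (‖F (circlePt r θ)‖₊ : ℝ≥0∞) := by
        exact_mod_cast h1
      refine h2'.trans (max_le_max le_rfl ?_)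
      exact le_iSup₂ (f := fun r (_ : r ∈ Set.Ico (0:ℝ) 1) => (‖F (circlePt r θ)‖₊ : ℝ≥0∞)) r hr
    calc (‖Fn (circlePt r θ)‖₊ : ℝ≥0∞) + 1 ≤ max 1 (maxRad F θ) + 1 := add_le_add h3 le_rfl
      _ = 1 + max 1 (maxRad F θ) := add_comm _ _
  have hl2 : (0:ℝ) < 2 * Real.log 2 := mul_pos two_pos (Real.log_pos one_lt_two)
  constructor
  · refine Filter.Eventually.of_forall fun θ => ?_
    have key := elog1p_le _ _ (hFn1bd θ)
    calc elog1p (maxRad (Fn - 1) θ) ^ p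
        ≤ (ENNReal.ofReal (2 * Real.log 2) + elogPlus (maxRad F θ)) ^ p :=
          ENNReal.rpow_le_rpow key hp0
      _ ≤ (2:ℝ≥0∞) ^ (p - 1) *
            (ENNReal.ofReal (2 * Real.log 2) ^ p + elogPlus (maxRad F θ) ^ p) :=
          ennreal_two_rpow _ _ hp.le
      _ = ENNReal.ofReal ((2 : ℝ) ^ (p - 1)) *
            (ENNReal.ofReal ((2 * Real.log 2) ^ p) + elogPlus (maxRad F θ) ^ p) := by
          have h2e : ENNReal.ofReal (2:ℝ) = 2 := by simp
          rw [← ENNReal.ofReal_rpow_of_pos hl2, ← ENNReal.ofReal_rpow_of_pos two_pos, h2e]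
  · rintro ⟨-, hInt⟩
    refine ⟨hFn, lt_of_le_of_lt ?_ hInt⟩
    refine ENNReal.div_le_div_right (lintegral_mono fun θ => ?_) _
    exact ENNReal.rpow_le_rpow (elogPlus_le _ _ (hFnbd θ)) hp0
end
end

section
/- Let 1 < p < ∞ and let a ∈ 𝔻. The set 𝓜_a = ((a − z)/(1 − ā z))·M^p = { z ↦ ((a − z)/(1 − ā z))·f(z) : f ∈ M^p } is a maximal ideal in the ring M^p, and it equals {f ∈ M^p : f(a) = 0}. -/
open MeasureTheory Filter Set
open scoped ENNReal Topology Real NNReal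

noncomputable section

/-- The Möbius factor `z ↦ (a − z)/(1 − conj a · z)`. -/
def mobiusFactor (a z : ℂ) : ℂ := (a - z) / (1 - (starRingEnd ℂ) a * z)

/-- The principal ideal `𝓜_a = ((a − z)/(1 − conj a · z))·M^p` of the ring `M^p`
(as a ring of functions on the unit disk). -/
def mobiusIdeal (p : ℝ) (a : ℂ) : Set (ℂ → ℂ) :=
  {g | ∃ f ∈ MpClass p, Set.EqOn g (fun z => mobiusFactor a z * f z) unitDisk}

section Helpers

/-! ### elementary facts -/

lemma circlePt_mem_unitDisk {r : ℝ} (hr : r ∈ Set.Ico (0:ℝ) 1) (θ : ℝ) :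
    circlePt r θ ∈ unitDisk := by
  have : ‖circlePt r θ‖ = r := by
    rw [circlePt, norm_mul, Complex.norm_real, Complex.norm_exp_ofReal_mul_I,
      mul_one, Real.norm_of_nonneg hr.1]
  simp only [unitDisk, Metric.mem_ball, dist_zero_right, this]
  exact hr.2

lemma elogPlus_mono : Monotone elogPlus := by
  intro x y hxy
  unfold elogPlus
  rcases eq_or_ne y ∞ with rfl | hy
  · simp
  have hx : x ≠ ∞ := fun h => hy (top_le_iff.mp (h ▸ hxy))
  rw [if_neg hx, if_neg hy]
  rcases eq_or_ne x 0 with rfl | hx0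
  · simp [Real.log_zero]
  apply ENNReal.ofReal_le_ofReal
  apply Real.log_le_log (ENNReal.toReal_pos hx0 hx)
  exact ENNReal.toReal_mono hy hxy

lemma elogPlus_ofReal {r : ℝ} (hr : 0 ≤ r) :
    elogPlus (ENNReal.ofReal r) = ENNReal.ofReal (Real.log r) := by
  rw [elogPlus, if_neg ENNReal.ofReal_ne_top, ENNReal.toReal_ofReal hr]

lemma elogPlus_mul_le (x y : ℝ≥0∞) : elogPlus (x * y) ≤ elogPlus x + elogPlus y := by
  rcases eq_or_ne x 0 with rfl | hx0
  · simp [elogPlus, Real.log_zero]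
  rcases eq_or_ne y 0 with rfl | hy0
  · simp [elogPlus, Real.log_zero]
  have htop : elogPlus ⊤ = ⊤ := if_pos rfl
  rcases eq_or_ne x ∞ with rfl | hx
  · simp [htop]
  rcases eq_or_ne y ∞ with rfl | hy
  · rw [ENNReal.mul_top hx0, htop]; simp [htop]
  rw [elogPlus, elogPlus, elogPlus, if_neg (ENNReal.mul_ne_top hx hy), if_neg hx, if_neg hy,
    ENNReal.toReal_mul, Real.log_mul (ENNReal.toReal_ne_zero.mpr ⟨hx0, hx⟩)
      (ENNReal.toReal_ne_zero.mpr ⟨hy0, hy⟩)]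
  exact ENNReal.ofReal_add_le

lemma elogPlus_two : elogPlus 2 = ENNReal.ofReal (Real.log 2) := by
  have : (2:ℝ≥0∞) = ENNReal.ofReal 2 := by simp
  rw [this, elogPlus_ofReal (by norm_num)]

lemma elogPlus_one_add_le (x : ℝ≥0∞) :
    elogPlus (1 + x) ≤ ENNReal.ofReal (Real.log 2) + elogPlus x := by
  rcases le_total x 1 with h | h
  · calc elogPlus (1 + x) ≤ elogPlus 2 := elogPlus_mono (by
        rw [← one_add_one_eq_two]; exact add_le_add le_rfl h)
    _ = ENNReal.ofReal (Real.log 2) := elogPlus_two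
    _ ≤ _ := le_self_add
  · calc elogPlus (1 + x) ≤ elogPlus (2 * x) := elogPlus_mono (by
        rw [two_mul]; exact add_le_add h le_rfl)
    _ ≤ elogPlus 2 + elogPlus x := elogPlus_mul_le _ _
    _ = _ := by rw [elogPlus_two]

lemma elogPlus_affine_le (C c : ℝ) (x : ℝ≥0∞) :
    elogPlus (ENNReal.ofReal C + ENNReal.ofReal c * x) ≤
      ENNReal.ofReal (Real.log (max 1 (max C c))) + ENNReal.ofReal (Real.log 2) + elogPlus x := by
  set K : ℝ := max 1 (max C c) with hK
  have hK1 : (1:ℝ) ≤ K := le_max_left _ _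
  have h1 : ENNReal.ofReal C + ENNReal.ofReal c * x ≤ ENNReal.ofReal K * (1 + x) := by
    rw [mul_add, mul_one]
    exact add_le_add (ENNReal.ofReal_le_ofReal ((le_max_left _ _).trans (le_max_right _ _)))
      (mul_le_mul_left
        (ENNReal.ofReal_le_ofReal ((le_max_right _ _).trans (le_max_right _ _))) x)
  calc elogPlus (ENNReal.ofReal C + ENNReal.ofReal c * x)
      ≤ elogPlus (ENNReal.ofReal K * (1 + x)) := elogPlus_mono h1
    _ ≤ elogPlus (ENNReal.ofReal K) + elogPlus (1 + x) := elogPlus_mul_le _ _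
    _ ≤ ENNReal.ofReal (Real.log K) + (ENNReal.ofReal (Real.log 2) + elogPlus x) := by
        rw [elogPlus_ofReal (by linarith)]
        exact add_le_add le_rfl (elogPlus_one_add_le x)
    _ = _ := by ring

/-! ### rpow facts -/

lemma rpow_add3_le (x y z : ℝ≥0∞) {p : ℝ} (hp : 0 ≤ p) :
    (x + y + z) ^ p ≤ 3 ^ p * (x ^ p + y ^ p + z ^ p) := by
  have hmono : Monotone (fun t : ℝ≥0∞ => t ^ p) := fun u v huv => ENNReal.rpow_le_rpow huv hp
  have h1 : x + y + z ≤ 3 * (x ⊔ y ⊔ z) := by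
    have hx : x ≤ x ⊔ y ⊔ z := le_sup_of_le_left le_sup_left
    have hy : y ≤ x ⊔ y ⊔ z := le_sup_of_le_left le_sup_right
    have hz : z ≤ x ⊔ y ⊔ z := le_sup_right
    calc x + y + z ≤ (x ⊔ y ⊔ z) + (x ⊔ y ⊔ z) + (x ⊔ y ⊔ z) :=
          add_le_add (add_le_add hx hy) hz
      _ = 3 * (x ⊔ y ⊔ z) := by ring
  calc (x + y + z) ^ p ≤ (3 * (x ⊔ y ⊔ z)) ^ p := hmono h1
    _ = 3 ^ p * (x ⊔ y ⊔ z) ^ p := ENNReal.mul_rpow_of_nonneg _ _ hp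
    _ ≤ 3 ^ p * (x ^ p + y ^ p + z ^ p) := by
        apply mul_le_mul_right
        rw [hmono.map_sup, hmono.map_sup]
        exact sup_le (sup_le (by simp [le_add_right]) (by
          calc y ^ p ≤ x ^ p + y ^ p := le_add_self
            _ ≤ _ := le_self_add)) le_add_self

end Helpers

section Part2

open Real

lemma isOpen_unitDisk : IsOpen unitDisk := Metric.isOpen_ball

lemma continuousAt_circlePt_fst (θ : ℝ) :
    Continuous fun r : ℝ => circlePt r θ := by
  exact (Complex.continuous_ofReal).mul continuous_const

lemma continuous_circlePt_snd (q : ℝ) :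
    Continuous fun θ : ℝ => circlePt q θ := by
  unfold circlePt
  fun_prop

lemma continuousAt_aux {f : ℂ → ℂ} (hf : DifferentiableOn ℂ f unitDisk)
    {z : ℂ} (hz : z ∈ unitDisk) : ContinuousAt f z :=
  (hf.continuousOn.continuousAt (isOpen_unitDisk.mem_nhds hz))

/-- The sup over radii can be restricted to rational radii. -/
lemma maxRad_eq_rat {f : ℂ → ℂ} (hf : DifferentiableOn ℂ f unitDisk) (θ : ℝ) :
    maxRad f θ = ⨆ q : {q : ℚ // (q : ℝ) ∈ Set.Ico (0:ℝ) 1},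
      (‖f (circlePt (q : ℝ) θ)‖₊ : ℝ≥0∞) := by
  set S := ⨆ q : {q : ℚ // (q : ℝ) ∈ Set.Ico (0:ℝ) 1}, (‖f (circlePt (q : ℝ) θ)‖₊ : ℝ≥0∞)
  apply le_antisymm
  · apply iSup₂_le
    intro r hr
    rcases eq_or_lt_of_le hr.1 with rfl | hr0
    · exact le_iSup_of_le ⟨(0:ℚ), by norm_num⟩ (by norm_num)
    -- approximate r from below by rationals
    have hq : ∀ n : ℕ, ∃ q : ℚ, r - 1/(n+1) < q ∧ (q : ℝ) < r := fun n =>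
      exists_rat_btwn (by
        have : (0:ℝ) < 1/(n+1) := by positivity
        linarith)
    choose q hq1 hq2 using hq
    have htend : Filter.Tendsto (fun n : ℕ => (q n : ℝ)) Filter.atTop (nhds r) := by
      have h1 : Filter.Tendsto (fun n : ℕ => r - 1/(n+1)) Filter.atTop (nhds r) := by
        have := tendsto_one_div_add_atTop_nhds_zero_nat (𝕜 := ℝ)
        have h2 := Filter.Tendsto.const_sub r this
        simpa using h2
      exact tendsto_of_tendsto_of_tendsto_of_le_of_le h1 tendsto_const_nhds
        (fun n => (hq1 n).le) (fun n => (hq2 n).le)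
    have hcont : Filter.Tendsto (fun n : ℕ => (‖f (circlePt (q n : ℝ) θ)‖₊ : ℝ≥0∞))
        Filter.atTop (nhds ((‖f (circlePt r θ)‖₊ : ℝ≥0∞))) := by
      have h1 : ContinuousAt f (circlePt r θ) :=
        continuousAt_aux hf (circlePt_mem_unitDisk ⟨hr.1, hr.2⟩ θ)
      have h2 : Filter.Tendsto (fun n : ℕ => circlePt (q n : ℝ) θ) Filter.atTop
          (nhds (circlePt r θ)) :=
        ((continuousAt_circlePt_fst θ).tendsto r).comp htend
      exact (ENNReal.continuous_coe.tendsto _).comp ((continuous_nnnorm.tendsto _).comp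
        (h1.tendsto.comp h2))
    have hev : ∀ᶠ n in Filter.atTop, (‖f (circlePt (q n : ℝ) θ)‖₊ : ℝ≥0∞) ≤ S := by
      have h0 : Filter.Tendsto (fun n : ℕ => (1:ℝ)/(n+1)) Filter.atTop (nhds 0) :=
        tendsto_one_div_add_atTop_nhds_zero_nat
      have : ∀ᶠ n : ℕ in Filter.atTop, (1:ℝ)/(n+1) < r := h0.eventually_lt_const hr0
      filter_upwards [this] with n hn
      have hmem : ((q n : ℝ)) ∈ Set.Ico (0:ℝ) 1 :=
        ⟨by have := hq1 n; linarith, (hq2 n).trans hr.2⟩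
      exact le_iSup_of_le ⟨q n, hmem⟩ le_rfl
    exact le_of_tendsto hcont hev
  · apply iSup_le
    rintro ⟨q, hq⟩
    exact le_iSup₂_of_le (q : ℝ) hq le_rfl

lemma measurable_maxRad {f : ℂ → ℂ} (hf : DifferentiableOn ℂ f unitDisk) :
    Measurable (maxRad f) := by
  have : maxRad f = fun θ => ⨆ q : {q : ℚ // (q : ℝ) ∈ Set.Ico (0:ℝ) 1},
      (‖f (circlePt (q : ℝ) θ)‖₊ : ℝ≥0∞) := funext fun θ => maxRad_eq_rat hf θ
  rw [this]
  apply Measurable.iSup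
  rintro ⟨q, hq⟩
  have hcont : Continuous fun θ : ℝ => (‖f (circlePt (q : ℝ) θ)‖₊ : ℝ≥0∞) := by
    rw [continuous_iff_continuousAt]
    intro θ
    have h1 : ContinuousAt f (circlePt (q : ℝ) θ) :=
      continuousAt_aux hf (circlePt_mem_unitDisk hq θ)
    exact (ENNReal.continuous_coe.continuousAt).comp
      ((continuous_nnnorm.continuousAt).comp
        (h1.comp ((continuous_circlePt_snd (q:ℝ)).continuousAt)))
  exact hcont.measurable

lemma measurable_elogPlus : Measurable elogPlus := by
  unfold elogPlus
  apply Measurable.ite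
  · rw [show {x : ℝ≥0∞ | x = ⊤} = {⊤} from rfl]
    exact measurableSet_singleton _
  · exact measurable_const
  · exact ENNReal.measurable_ofReal.comp (Real.measurable_log.comp ENNReal.measurable_toReal)

lemma Mp_integral_lt_top {p : ℝ} {f : ℂ → ℂ} (hf : f ∈ MpClass p) :
    (∫⁻ θ in Set.Ioc 0 (2 * π), elogPlus (maxRad f θ) ^ p) < ∞ := by
  by_contra h
  push_neg at h
  have h1 : (∫⁻ θ in Set.Ioc 0 (2 * π), elogPlus (maxRad f θ) ^ p) = ∞ := top_le_iff.mp h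
  have h2 := hf.2
  rw [h1, ENNReal.top_div_of_ne_top ENNReal.ofReal_ne_top] at h2
  exact lt_irrefl _ h2

/-- Master membership lemma: if `g` is dominated by two elements of `M^p`, it is in `M^p`. -/
lemma mem_MpClass_of_dominated {p : ℝ} (hp : 1 < p) {f₁ f₂ g : ℂ → ℂ}
    (hf₁ : f₁ ∈ MpClass p) (hf₂ : f₂ ∈ MpClass p)
    (hg : DifferentiableOn ℂ g unitDisk) (A : ℝ≥0∞) (hA : A ≠ ∞)
    (hle : ∀ θ, elogPlus (maxRad g θ) ≤
      A + elogPlus (maxRad f₁ θ) + elogPlus (maxRad f₂ θ)) :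
    g ∈ MpClass p := by
  have hp0 : (0:ℝ) ≤ p := by linarith
  refine ⟨hg, ?_⟩
  have hbound : ∀ θ, elogPlus (maxRad g θ) ^ p ≤
      3 ^ p * (A ^ p + elogPlus (maxRad f₁ θ) ^ p + elogPlus (maxRad f₂ θ) ^ p) := by
    intro θ
    calc elogPlus (maxRad g θ) ^ p
        ≤ (A + elogPlus (maxRad f₁ θ) + elogPlus (maxRad f₂ θ)) ^ p :=
          ENNReal.rpow_le_rpow (hle θ) hp0
      _ ≤ _ := rpow_add3_le _ _ _ hp0
  have hmeas₁ : Measurable fun θ => A ^ p + elogPlus (maxRad f₁ θ) ^ p :=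
    measurable_const.add ((measurable_elogPlus.comp (measurable_maxRad hf₁.1)).pow_const p)
  have h3p : (3:ℝ≥0∞) ^ p ≠ ∞ := ENNReal.rpow_ne_top_of_nonneg hp0 (by norm_num)
  have key : (∫⁻ θ in Set.Ioc 0 (2 * π), elogPlus (maxRad g θ) ^ p) < ∞ := by
    calc (∫⁻ θ in Set.Ioc 0 (2 * π), elogPlus (maxRad g θ) ^ p)
        ≤ ∫⁻ θ in Set.Ioc 0 (2 * π),
            3 ^ p * (A ^ p + elogPlus (maxRad f₁ θ) ^ p + elogPlus (maxRad f₂ θ) ^ p) :=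
          MeasureTheory.lintegral_mono hbound
      _ = 3 ^ p * ∫⁻ θ in Set.Ioc 0 (2 * π),
            ((A ^ p + elogPlus (maxRad f₁ θ) ^ p) + elogPlus (maxRad f₂ θ) ^ p) :=
          MeasureTheory.lintegral_const_mul' _ _ h3p
      _ = 3 ^ p * ((∫⁻ θ in Set.Ioc 0 (2 * π), (A ^ p + elogPlus (maxRad f₁ θ) ^ p)) +
            ∫⁻ θ in Set.Ioc 0 (2 * π), elogPlus (maxRad f₂ θ) ^ p) := by
          rw [MeasureTheory.lintegral_add_left hmeas₁]
      _ = 3 ^ p * (((∫⁻ _ in Set.Ioc 0 (2 * π), A ^ p) +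
            ∫⁻ θ in Set.Ioc 0 (2 * π), elogPlus (maxRad f₁ θ) ^ p) +
            ∫⁻ θ in Set.Ioc 0 (2 * π), elogPlus (maxRad f₂ θ) ^ p) := by
          rw [MeasureTheory.lintegral_add_left measurable_const]
      _ < ∞ := by
          apply ENNReal.mul_lt_top h3p.lt_top
          apply ENNReal.add_lt_top.mpr
          constructor
          · apply ENNReal.add_lt_top.mpr
            constructor
            · rw [MeasureTheory.lintegral_const]
              exact ENNReal.mul_lt_top (ENNReal.rpow_ne_top_of_nonneg hp0 hA).lt_top
                (by simp [Real.volume_Ioc]; exact ENNReal.mul_lt_top (by norm_num) ENNReal.ofReal_lt_top)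
            · exact Mp_integral_lt_top hf₁
          · exact Mp_integral_lt_top hf₂
  exact ENNReal.div_lt_top key.ne (by positivity)

end Part2

section Part3

open Real

lemma mem_unitDisk {z : ℂ} : z ∈ unitDisk ↔ ‖z‖ < 1 := by
  simp [unitDisk, Metric.mem_ball, dist_zero_right]

lemma mobius_denom_ne_zero {a z : ℂ} (ha : ‖a‖ < 1) (hz : ‖z‖ < 1) :
    1 - (starRingEnd ℂ) a * z ≠ 0 := by
  intro h
  have h1 : (starRingEnd ℂ) a * z = 1 := by linear_combination -h
  have hn : ‖(starRingEnd ℂ) a * z‖ < 1 := by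
    rw [norm_mul, RCLike.norm_conj]
    nlinarith [norm_nonneg a, norm_nonneg z]
  rw [h1] at hn
  simp at hn

lemma norm_mobius_le_one {a z : ℂ} (ha : ‖a‖ < 1) (hz : ‖z‖ < 1) :
    ‖mobiusFactor a z‖ ≤ 1 := by
  have ha2 : a.re * a.re + a.im * a.im < 1 := by
    have := Complex.normSq_eq_norm_sq a
    have h1 : Complex.normSq a < 1 := by
      rw [Complex.normSq_eq_norm_sq]
      nlinarith [norm_nonneg a]
    simpa [Complex.normSq_apply] using h1
  have hz2 : z.re * z.re + z.im * z.im < 1 := by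
    have h1 : Complex.normSq z < 1 := by
      rw [Complex.normSq_eq_norm_sq]
      nlinarith [norm_nonneg z]
    simpa [Complex.normSq_apply] using h1
  have key : Complex.normSq (a - z) ≤ Complex.normSq (1 - (starRingEnd ℂ) a * z) := by
    simp only [Complex.normSq_apply, Complex.sub_re, Complex.sub_im, Complex.one_re,
      Complex.one_im, Complex.mul_re, Complex.mul_im]
    simp only [Complex.conj_re, Complex.conj_im]
    nlinarith [mul_nonneg (by linarith : (0:ℝ) ≤ 1 - (a.re*a.re + a.im*a.im))
      (by linarith : (0:ℝ) ≤ 1 - (z.re*z.re + z.im*z.im))]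
  rw [mobiusFactor, norm_div]
  apply div_le_one_of_le₀
  · rw [Complex.norm_def, Complex.norm_def]
    exact Real.sqrt_le_sqrt key
  · exact norm_nonneg _

lemma differentiableOn_mobius {a : ℂ} (ha : a ∈ unitDisk) :
    DifferentiableOn ℂ (fun z => mobiusFactor a z) unitDisk := by
  apply DifferentiableOn.div
  · exact (differentiableOn_const a).sub differentiableOn_id
  · exact (differentiableOn_const _).sub
      ((differentiableOn_const _).mul differentiableOn_id)
  · intro z hz
    exact mobius_denom_ne_zero (mem_unitDisk.mp ha) (mem_unitDisk.mp hz)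

lemma maxRad_const (c : ℂ) (θ : ℝ) : maxRad (fun _ => c) θ = (‖c‖₊ : ℝ≥0∞) := by
  apply le_antisymm
  · exact iSup₂_le fun _ _ => le_rfl
  · exact le_iSup₂_of_le 0 ⟨le_rfl, one_pos⟩ le_rfl

lemma const_mem_Mp {p : ℝ} (hp : 0 ≤ p) (c : ℂ) : (fun _ : ℂ => c) ∈ MpClass p := by
  refine ⟨differentiableOn_const c, ?_⟩
  apply ENNReal.div_lt_top _ (by positivity)
  have : ∀ θ : ℝ, elogPlus (maxRad (fun _ => c) θ) ^ p =
      elogPlus ((‖c‖₊ : ℝ≥0∞)) ^ p := fun θ => by rw [maxRad_const]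
  rw [MeasureTheory.lintegral_congr this, MeasureTheory.lintegral_const]
  have h1 : elogPlus ((‖c‖₊ : ℝ≥0∞)) ≠ ⊤ := by
    rw [elogPlus, if_neg ENNReal.coe_ne_top]
    exact ENNReal.ofReal_ne_top
  exact (ENNReal.mul_lt_top (ENNReal.rpow_ne_top_of_nonneg hp h1).lt_top
      (by simp [Real.volume_Ioc]; exact ENNReal.mul_lt_top (by norm_num) ENNReal.ofReal_lt_top)).ne

lemma maxRad_add_le (f g : ℂ → ℂ) (θ : ℝ) :
    maxRad (f + g) θ ≤ maxRad f θ + maxRad g θ := by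
  apply iSup₂_le
  intro r hr
  calc (‖(f + g) (circlePt r θ)‖₊ : ℝ≥0∞)
      ≤ (‖f (circlePt r θ)‖₊ : ℝ≥0∞) + (‖g (circlePt r θ)‖₊ : ℝ≥0∞) := by
        rw [Pi.add_apply, ← ENNReal.coe_add]
        exact ENNReal.coe_le_coe.mpr (nnnorm_add_le _ _)
    _ ≤ maxRad f θ + maxRad g θ :=
        add_le_add (le_iSup₂_of_le r hr le_rfl) (le_iSup₂_of_le r hr le_rfl)

lemma maxRad_mul_le (f g : ℂ → ℂ) (θ : ℝ) :
    maxRad (f * g) θ ≤ maxRad f θ * maxRad g θ := by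
  apply iSup₂_le
  intro r hr
  calc (‖(f * g) (circlePt r θ)‖₊ : ℝ≥0∞)
      = (‖f (circlePt r θ)‖₊ : ℝ≥0∞) * (‖g (circlePt r θ)‖₊ : ℝ≥0∞) := by
        rw [Pi.mul_apply, ← ENNReal.coe_mul, nnnorm_mul]
    _ ≤ maxRad f θ * maxRad g θ :=
        mul_le_mul' (le_iSup₂_of_le r hr le_rfl) (le_iSup₂_of_le r hr le_rfl)

lemma maxRad_neg (f : ℂ → ℂ) (θ : ℝ) : maxRad (-f) θ = maxRad f θ := by
  unfold maxRad
  congr 1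
  ext r
  congr 1
  ext hr
  simp

lemma elogPlus_add_le (x y : ℝ≥0∞) :
    elogPlus (x + y) ≤ ENNReal.ofReal (Real.log 2) + elogPlus x + elogPlus y := by
  rcases le_total x y with h | h
  · calc elogPlus (x + y) ≤ elogPlus (2 * y) := elogPlus_mono (by rw [two_mul]; exact add_le_add h le_rfl)
      _ ≤ elogPlus 2 + elogPlus y := elogPlus_mul_le _ _
      _ = ENNReal.ofReal (Real.log 2) + elogPlus y := by rw [elogPlus_two]
      _ ≤ _ := by
        rw [add_assoc]
        exact add_le_add le_rfl le_add_self
  · calc elogPlus (x + y) ≤ elogPlus (2 * x) := elogPlus_mono (by rw [two_mul]; exact add_le_add le_rfl h)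
      _ ≤ elogPlus 2 + elogPlus x := elogPlus_mul_le _ _
      _ = ENNReal.ofReal (Real.log 2) + elogPlus x := by rw [elogPlus_two]
      _ ≤ _ := le_self_add

lemma Mp_add {p : ℝ} (hp : 1 < p) {f g : ℂ → ℂ} (hf : f ∈ MpClass p) (hg : g ∈ MpClass p) :
    f + g ∈ MpClass p := by
  apply mem_MpClass_of_dominated hp hf hg (hf.1.add hg.1) (ENNReal.ofReal (Real.log 2))
    ENNReal.ofReal_ne_top
  intro θ
  calc elogPlus (maxRad (f + g) θ) ≤ elogPlus (maxRad f θ + maxRad g θ) :=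
        elogPlus_mono (maxRad_add_le f g θ)
    _ ≤ _ := elogPlus_add_le _ _

lemma Mp_mul {p : ℝ} (hp : 1 < p) {f g : ℂ → ℂ} (hf : f ∈ MpClass p) (hg : g ∈ MpClass p) :
    f * g ∈ MpClass p := by
  apply mem_MpClass_of_dominated hp hf hg (hf.1.mul hg.1) 0 (by simp)
  intro θ
  rw [zero_add]
  calc elogPlus (maxRad (f * g) θ) ≤ elogPlus (maxRad f θ * maxRad g θ) :=
        elogPlus_mono (maxRad_mul_le f g θ)
    _ ≤ _ := elogPlus_mul_le _ _

lemma Mp_neg {p : ℝ} (hp : 1 < p) {f : ℂ → ℂ} (hf : f ∈ MpClass p) : -f ∈ MpClass p := by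
  apply mem_MpClass_of_dominated hp hf hf hf.1.neg 0 (by simp)
  intro θ
  have h : maxRad (fun y => -f y) θ = maxRad f θ := by
    rw [show (fun y => -f y) = -f from rfl, maxRad_neg]
  rw [zero_add]
  calc elogPlus (maxRad (-f) θ) = elogPlus (maxRad f θ) := by
        rw [show (-f : ℂ → ℂ) = (fun y => -f y) from rfl, h]
    _ ≤ _ := le_self_add

lemma Mp_of_le_maxRad {p : ℝ} (hp : 1 < p) {f g : ℂ → ℂ} (hf : f ∈ MpClass p)
    (hg : DifferentiableOn ℂ g unitDisk) (hle : ∀ θ, maxRad g θ ≤ maxRad f θ) :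
    g ∈ MpClass p := by
  apply mem_MpClass_of_dominated hp hf hf hg 0 (by simp)
  intro θ
  rw [zero_add]
  exact (elogPlus_mono (hle θ)).trans le_self_add

end Part3

section Part4

open Real

lemma norm_circlePt {r : ℝ} (hr : 0 ≤ r) (θ : ℝ) : ‖circlePt r θ‖ = r := by
  rw [circlePt, norm_mul, Complex.norm_real, Complex.norm_exp_ofReal_mul_I,
    mul_one, Real.norm_of_nonneg hr]

/-- The key division lemma: a function in `M^p` vanishing at `a` lies in the Möbius ideal. -/
lemma mem_mobiusIdeal_of_zero {p : ℝ} (hp : 1 < p) {a : ℂ} (ha : a ∈ unitDisk)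
    {f : ℂ → ℂ} (hf : f ∈ MpClass p) (hfa : f a = 0) : f ∈ mobiusIdeal p a := by
  have ha1 : ‖a‖ < 1 := mem_unitDisk.mp ha
  set h : ℂ → ℂ := fun z => -(1 - (starRingEnd ℂ) a * z) * dslope f a z with hh
  have hdiff : DifferentiableOn ℂ h unitDisk := by
    apply DifferentiableOn.mul
    · apply DifferentiableOn.neg
      exact (differentiableOn_const _).sub ((differentiableOn_const _).mul differentiableOn_id)
    · exact (Complex.differentiableOn_dslope (isOpen_unitDisk.mem_nhds ha)).mpr hf.1
  have heq : Set.EqOn f (fun z => mobiusFactor a z * h z) unitDisk := by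
    intro z hz
    have hz1 : ‖z‖ < 1 := mem_unitDisk.mp hz
    rcases eq_or_ne z a with rfl | hne
    · simp [mobiusFactor, hfa]
    · have hden := mobius_denom_ne_zero ha1 hz1
      have hza : z - a ≠ 0 := sub_ne_zero.mpr hne
      show f z = mobiusFactor a z * h z
      rw [hh]
      simp only [mobiusFactor]
      rw [dslope_of_ne f hne, slope_def_field, hfa, sub_zero]
      rw [div_mul_eq_mul_div, eq_div_iff hden]
      field_simp
      ring
  -- quantitative bound
  set s : ℝ := (1 + ‖a‖)/2 with hs
  have has : ‖a‖ < s := by rw [hs]; linarith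
  have hs1 : s < 1 := by rw [hs]; linarith
  have hs0 : (0:ℝ) ≤ s := by rw [hs]; positivity
  have hsa : (0:ℝ) < s - ‖a‖ := by linarith
  have hKsub : Metric.closedBall (0:ℂ) s ⊆ unitDisk := by
    intro z hz
    rw [Metric.mem_closedBall, dist_zero_right] at hz
    exact mem_unitDisk.mpr (hz.trans_lt hs1)
  obtain ⟨C, hC⟩ := (isCompact_closedBall (0:ℂ) s).exists_bound_of_continuousOn
    (hdiff.continuousOn.mono hKsub)
  set c : ℝ := 2 / (s - ‖a‖) with hc
  have hc0 : 0 ≤ c := by positivity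
  have hbound : ∀ θ, maxRad h θ ≤ ENNReal.ofReal C + ENNReal.ofReal c * maxRad f θ := by
    intro θ
    apply iSup₂_le
    intro r hr
    have hzn : ‖circlePt r θ‖ = r := norm_circlePt hr.1 θ
    rcases le_or_gt r s with hrs | hrs
    · have h1 : ‖h (circlePt r θ)‖ ≤ C := hC _ (by
        rw [Metric.mem_closedBall, dist_zero_right, hzn]; exact hrs)
      calc (‖h (circlePt r θ)‖₊ : ℝ≥0∞) = ENNReal.ofReal ‖h (circlePt r θ)‖ :=
            (ofReal_norm _).symm
        _ ≤ ENNReal.ofReal C := ENNReal.ofReal_le_ofReal h1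
        _ ≤ _ := le_self_add
    · set z := circlePt r θ with hz
      have hz1 : ‖z‖ < 1 := by rw [hzn]; exact hr.2
      have hzd : z ∈ unitDisk := mem_unitDisk.mpr hz1
      have hfz : f z = mobiusFactor a z * h z := heq hzd
      have hden := mobius_denom_ne_zero ha1 hz1
      have hD0 : 0 < ‖1 - (starRingEnd ℂ) a * z‖ := norm_pos_iff.mpr hden
      have hlow : (s - ‖a‖)/2 ≤ ‖mobiusFactor a z‖ := by
        rw [mobiusFactor, norm_div, div_le_div_iff₀ two_pos hD0]
        have h1 : s - ‖a‖ ≤ ‖a - z‖ := by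
          have h2 : ‖z‖ - ‖a‖ ≤ ‖z - a‖ := norm_sub_norm_le z a
          rw [norm_sub_rev] at h2
          have : s ≤ ‖z‖ := by rw [hzn]; exact hrs.le
          linarith
        have h2 : ‖1 - (starRingEnd ℂ) a * z‖ ≤ 2 := by
          calc ‖1 - (starRingEnd ℂ) a * z‖ ≤ ‖(1:ℂ)‖ + ‖(starRingEnd ℂ) a * z‖ :=
                norm_sub_le _ _
            _ = 1 + ‖a‖ * ‖z‖ := by rw [norm_one, norm_mul, RCLike.norm_conj]
            _ ≤ 2 := by nlinarith [norm_nonneg a, norm_nonneg z]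
        nlinarith [norm_nonneg (a - z)]
      have hnorm : ‖h z‖ ≤ c * ‖f z‖ := by
        have h3 : (s - ‖a‖)/2 * ‖h z‖ ≤ ‖f z‖ := by
          calc (s - ‖a‖)/2 * ‖h z‖ ≤ ‖mobiusFactor a z‖ * ‖h z‖ :=
                mul_le_mul_of_nonneg_right hlow (norm_nonneg _)
            _ = ‖f z‖ := by rw [← norm_mul, ← hfz]
        rw [hc, div_mul_eq_mul_div, le_div_iff₀ hsa]
        nlinarith
      calc (‖h z‖₊ : ℝ≥0∞) = ENNReal.ofReal ‖h z‖ := (ofReal_norm _).symm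
        _ ≤ ENNReal.ofReal (c * ‖f z‖) := ENNReal.ofReal_le_ofReal hnorm
        _ = ENNReal.ofReal c * ENNReal.ofReal ‖f z‖ := ENNReal.ofReal_mul hc0
        _ = ENNReal.ofReal c * (‖f z‖₊ : ℝ≥0∞) := by rw [ofReal_norm]; rfl
        _ ≤ ENNReal.ofReal c * maxRad f θ := by
            apply mul_le_mul_right
            exact le_iSup₂_of_le r hr (le_rfl : (‖f (circlePt r θ)‖₊ : ℝ≥0∞) ≤ _)
        _ ≤ _ := le_add_self
  have hmem : h ∈ MpClass p := by
    apply mem_MpClass_of_dominated hp hf hf hdiff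
      (ENNReal.ofReal (Real.log (max 1 (max C c))) + ENNReal.ofReal (Real.log 2))
      (ENNReal.add_ne_top.mpr ⟨ENNReal.ofReal_ne_top, ENNReal.ofReal_ne_top⟩)
    intro θ
    calc elogPlus (maxRad h θ)
        ≤ elogPlus (ENNReal.ofReal C + ENNReal.ofReal c * maxRad f θ) :=
          elogPlus_mono (hbound θ)
      _ ≤ ENNReal.ofReal (Real.log (max 1 (max C c))) + ENNReal.ofReal (Real.log 2) +
            elogPlus (maxRad f θ) := elogPlus_affine_le C c _
      _ ≤ _ := le_self_add
  exact ⟨h, hmem, heq⟩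

end Part4

section Part5

open Real

lemma mobiusFactor_self (a : ℂ) : mobiusFactor a a = 0 := by
  simp [mobiusFactor]

lemma mobiusIdeal_charact {p : ℝ} (hp : 1 < p) {a : ℂ} (ha : a ∈ unitDisk) :
    mobiusIdeal p a = {f ∈ MpClass p | f a = 0} := by
  apply Set.Subset.antisymm
  · rintro g ⟨f, hfM, heq⟩
    have hgd : DifferentiableOn ℂ g unitDisk :=
      (((differentiableOn_mobius ha).mul hfM.1)).congr heq
    have hgM : g ∈ MpClass p := by
      apply Mp_of_le_maxRad hp hfM hgd
      intro θ
      apply iSup₂_le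
      intro r hr
      have hzd := circlePt_mem_unitDisk hr θ
      have hzn : ‖circlePt r θ‖ < 1 := mem_unitDisk.mp hzd
      calc (‖g (circlePt r θ)‖₊ : ℝ≥0∞) = ENNReal.ofReal ‖g (circlePt r θ)‖ :=
            (ofReal_norm _).symm
        _ ≤ ENNReal.ofReal ‖f (circlePt r θ)‖ := by
            apply ENNReal.ofReal_le_ofReal
            rw [heq hzd, norm_mul]
            exact mul_le_of_le_one_left (norm_nonneg _)
              (norm_mobius_le_one (mem_unitDisk.mp ha) hzn)
        _ = (‖f (circlePt r θ)‖₊ : ℝ≥0∞) := ofReal_norm _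
        _ ≤ maxRad f θ := le_iSup₂_of_le r hr
            (le_rfl : (‖f (circlePt r θ)‖₊ : ℝ≥0∞) ≤ _)
    refine ⟨hgM, ?_⟩
    rw [heq ha]
    simp [mobiusFactor_self]
  · rintro f ⟨hfM, hfa⟩
    exact mem_mobiusIdeal_of_zero hp ha hfM hfa

theorem mobius_principal_ideal_maximal' (p : ℝ) (hp : 1 < p) (a : ℂ) (ha : a ∈ unitDisk) :
    IsIdealIn p (mobiusIdeal p a) ∧
    mobiusIdeal p a ≠ MpClass p ∧
    (∀ J : Set (ℂ → ℂ), IsIdealIn p J → mobiusIdeal p a ⊆ J →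
      J = mobiusIdeal p a ∨ J = MpClass p) ∧
    mobiusIdeal p a = {f ∈ MpClass p | f a = 0} := by
  have hp0 : (0:ℝ) ≤ p := by linarith
  have charact := mobiusIdeal_charact hp ha
  have hideal : IsIdealIn p (mobiusIdeal p a) := by
    constructor
    · intro g hg
      rw [charact] at hg
      exact hg.1
    · exact ⟨(fun _ => 0), const_mem_Mp hp0 0, fun z _ => by simp⟩
    · rintro g₁ ⟨f₁, h₁, e₁⟩ g₂ ⟨f₂, h₂, e₂⟩
      refine ⟨f₁ + f₂, Mp_add hp h₁ h₂, fun z hz => ?_⟩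
      simp only [Pi.add_apply, e₁ hz, e₂ hz]
      ring
    · rintro g ⟨f, h₁, e₁⟩
      refine ⟨-f, Mp_neg hp h₁, fun z hz => ?_⟩
      simp only [Pi.neg_apply, e₁ hz]
      ring
    · rintro f hfM g ⟨f₀, h₀, e₀⟩
      refine ⟨f * f₀, Mp_mul hp hfM h₀, fun z hz => ?_⟩
      simp only [Pi.mul_apply, e₀ hz]
      ring
  refine ⟨hideal, ?_, ?_, charact⟩
  · intro hEq
    have h1 : (fun _ : ℂ => (1:ℂ)) ∈ mobiusIdeal p a := by
      rw [hEq]; exact const_mem_Mp hp0 1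
    rw [charact] at h1
    exact one_ne_zero h1.2
  · intro J hJ hsub
    by_cases hJsub : J ⊆ mobiusIdeal p a
    · left; exact Set.Subset.antisymm hJsub hsub
    · right
      obtain ⟨g, hgJ, hgn⟩ := Set.not_subset.mp hJsub
      have hgM : g ∈ MpClass p := hJ.subset hgJ
      have hga : g a ≠ 0 := fun h0 => hgn (mem_mobiusIdeal_of_zero hp ha hgM h0)
      apply Set.Subset.antisymm hJ.subset
      intro f hfM
      have hconstM : (fun _ : ℂ => g a) ∈ MpClass p := const_mem_Mp hp0 _
      have hsubM : g + -(fun _ : ℂ => g a) ∈ MpClass p := Mp_add hp hgM (Mp_neg hp hconstM)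
      have hval : (g + -(fun _ : ℂ => g a)) a = 0 := by simp
      have hmem1 : g + -(fun _ : ℂ => g a) ∈ J :=
        hsub (mem_mobiusIdeal_of_zero hp ha hsubM hval)
      have hmem2 : (fun _ : ℂ => g a) ∈ J := by
        have hx := hJ.add_mem g hgJ _ (hJ.neg_mem _ hmem1)
        have heqf : g + -(g + -(fun _ : ℂ => g a)) = (fun _ : ℂ => g a) := by
          funext z
          simp only [Pi.add_apply, Pi.neg_apply]
          ring
        rwa [heqf] at hx
      have hf' : (fun _ : ℂ => (g a)⁻¹) * f ∈ MpClass p :=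
        Mp_mul hp (const_mem_Mp hp0 ((g a)⁻¹)) hfM
      have hx := hJ.mul_mem _ hf' _ hmem2
      have heqf2 : ((fun _ : ℂ => (g a)⁻¹) * f) * (fun _ : ℂ => g a) = f := by
        funext z
        simp only [Pi.mul_apply]
        field_simp
      rwa [heqf2] at hx

end Part5


/-- For `1 < p < ∞` and `a` in the unit disk, the set
`𝓜_a = ((a − z)/(1 − conj a·z))·M^p` is a maximal ideal of `M^p`, and
`𝓜_a = {f ∈ M^p : f(a) = 0}`. -/
theorem mobius_principal_ideal_maximal (p : ℝ) (hp : 1 < p) (a : ℂ) (ha : a ∈ unitDisk) :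
    IsIdealIn p (mobiusIdeal p a) ∧
    mobiusIdeal p a ≠ MpClass p ∧
    (∀ J : Set (ℂ → ℂ), IsIdealIn p J → mobiusIdeal p a ⊆ J →
      J = mobiusIdeal p a ∨ J = MpClass p) ∧
    mobiusIdeal p a = {f ∈ MpClass p | f a = 0} := by
  exact mobius_principal_ideal_maximal' p hp a ha
end
end
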